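/- arXiv:math/0703345 — 5 statements merged into one kernel-verified Lean document; each statement's English description precedes it below -/
import Mathlib

section
/- Let (A, E) be a non-commutative probability space and let (X_i)_{i≥1} be a sequence of self-adjoint elements with E(X_i) = 0 for all i. If the family (X_i) is free, then the sequence (X_i) satisfies Condition A (all three parts). -/
open scoped ComplexOrder

/-- Free families satisfy Condition A.  The sequence is indexed by `ℕ`, with index
`i : ℕ` corresponding to `X_{i+1}` of the paper; accordingly the condition "k ≥ 2"
of Condition A becomes `1 ≤ k`. -/
theorem free_implies_conditionA
    {A : Type*} [Ring A] [StarRing A] [Algebra ℂ A] [StarModule ℂ A]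
    (E : A →ₗ[ℂ] ℂ)
    (hE1 : E 1 = 1)
    (hEpos : ∀ x : A, 0 ≤ E (star x * x))
    (hEtr : ∀ x y : A, E (x * y) = E (y * x))
    (X : ℕ → A)
    (hsa : ∀ i, star (X i) = X i)
    (hmean : ∀ i, E (X i) = 0)
    -- the family `(X i)` is free
    (hfree : ∀ L : List (ℕ × Polynomial ℂ), L ≠ [] →
      (L.map Prod.fst).Chain' (· ≠ ·) →
      (∀ q ∈ L, E (Polynomial.aeval (X q.1) q.2) = 0) →
      E ((L.map fun q => Polynomial.aeval (X q.1) q.2).prod) = 0) :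
    -- Condition A, part (1)
    (∀ k, ∀ l : List ℕ, (∀ i ∈ l, i ≠ k) →
      E (X k * (l.map X).prod) = 0) ∧
    -- Condition A, part (2)
    (∀ k, 1 ≤ k → ∀ l : List ℕ, (∀ i ∈ l, i < k) →
      E (X k ^ 2 * (l.map X).prod) = E (X k ^ 2) * E ((l.map X).prod)) ∧
    -- Condition A, part (3)
    (∀ k, 1 ≤ k → ∀ l₁ l₂ : List ℕ, (∀ i ∈ l₁, i < k) → (∀ i ∈ l₂, i < k) →
      E (X k * (l₁.map X).prod * X k * (l₂.map X).prod)
        = E (X k ^ 2) * E ((l₁.map X).prod) * E ((l₂.map X).prod)) := by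
  classical
  set F : ℕ × Polynomial ℂ → A := fun q => Polynomial.aeval (X q.1) q.2 with hFdef
  have hFX : ∀ a : ℕ, F (a, Polynomial.X) = X a := by
    intro a; simp [hFdef]
  have hcX : ∀ a : ℕ, E (F (a, Polynomial.X)) = 0 := by
    intro a; rw [hFX]; exact hmean a
  -- basic facts
  have hEalg : ∀ c : ℂ, E (algebraMap ℂ A c) = c := by
    intro c
    rw [Algebra.algebraMap_eq_smul_one, map_smul, hE1, smul_eq_mul, mul_one]
  have hEsmul : ∀ (c : ℂ) (x : A), E (c • x) = c * E x := by
    intro c x; rw [map_smul, smul_eq_mul]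
  have hFC : ∀ (a : ℕ) (c : ℂ), F (a, Polynomial.C c) = algebraMap ℂ A c := by
    intro a c; simp [hFdef]
  have hcent : ∀ (a : ℕ) (q : Polynomial ℂ),
      E (F (a, q - Polynomial.C (E (F (a, q))))) = 0 := by
    intro a q
    have : F (a, q - Polynomial.C (E (F (a, q))))
        = F (a, q) - algebraMap ℂ A (E (F (a, q))) := by
      simp [hFdef]
    rw [this, map_sub, hEalg, sub_self]
  have hprodsplit : ∀ (L₁ L₂ : List (ℕ × Polynomial ℂ)) (a : ℕ) (q : Polynomial ℂ),
      (((L₁ ++ (a, q) :: L₂)).map F).prod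
        = (((L₁ ++ (a, q - Polynomial.C (E (F (a, q)))) :: L₂)).map F).prod
          + (E (F (a, q))) • (((L₁ ++ L₂)).map F).prod := by
    intro L₁ L₂ a q
    set c := E (F (a, q)) with hc
    simp only [List.map_append, List.prod_append, List.map_cons, List.prod_cons, hFdef,
      map_sub, Polynomial.aeval_C]
    rw [sub_mul, mul_sub, Algebra.algebraMap_eq_smul_one, smul_mul_assoc, one_mul,
      mul_smul_comm]
    abel
  -- regrouping: any block list has same product as an alternating block list
  have hregroup : ∀ L : List (ℕ × Polynomial ℂ), ∃ L' : List (ℕ × Polynomial ℂ),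
      ((L'.map F).prod = (L.map F).prod) ∧ (L'.map Prod.fst).Chain' (· ≠ ·) ∧
      (∀ q ∈ L', q.1 ∈ L.map Prod.fst) ∧ L'.length ≤ L.length := by
    intro L
    induction L with
    | nil => exact ⟨[], by simp, List.isChain_nil, by simp, le_rfl⟩
    | cons x t ih =>
      obtain ⟨a, p⟩ := x
      obtain ⟨M, hMp, hMc, hMm, hMl⟩ := ih
      match M, hMp, hMc, hMm, hMl with
      | [], hMp, hMc, hMm, hMl =>
        refine ⟨[(a, p)], ?_, List.isChain_singleton _, by simp, by simp⟩
        simp only [List.map_cons, List.prod_cons, List.map_nil, List.prod_nil] at hMp ⊢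
        rw [← hMp, mul_one]
      | (b, q) :: M', hMp, hMc, hMm, hMl =>
        by_cases hab : a = b
        · refine ⟨(a, p * q) :: M', ?_, ?_, ?_, ?_⟩
          · simp only [List.map_cons, List.prod_cons] at hMp ⊢
            rw [← hMp, hFdef]
            simp only [map_mul, hab]
            rw [mul_assoc]
          · simpa [hab] using hMc
          · intro z hz
            rcases List.mem_cons.mp hz with h | h
            · subst h; simp
            · simp only [List.map_cons, List.mem_cons]
              right
              exact hMm z (List.mem_cons_of_mem _ h)
          · simp only [List.length_cons] at hMl ⊢
            omega
        · refine ⟨(a, p) :: (b, q) :: M', ?_, ?_, ?_, ?_⟩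
          · simp only [List.map_cons, List.prod_cons] at hMp ⊢
            rw [← hMp]
          · simp only [List.map_cons, List.Chain', List.isChain_cons_cons]
            exact ⟨hab, by simpa [List.Chain'] using hMc⟩
          · intro z hz
            rcases List.mem_cons.mp hz with h | h
            · subst h; simp
            · simp only [List.map_cons, List.mem_cons]
              right
              exact hMm z h
          · simpa using Nat.succ_le_succ hMl
  have hfree' : ∀ L : List (ℕ × Polynomial ℂ), L ≠ [] →
      (L.map Prod.fst).Chain' (· ≠ ·) →
      (∀ q ∈ L, E (F q) = 0) → E ((L.map F).prod) = 0 := by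
    intro L h1 h2 h3
    have := hfree L h1 h2 (fun q hq => by simpa [hFdef] using h3 q hq)
    simpa [hFdef] using this
  -- main absorption lemma
  have hL : ∀ (n k : ℕ) (p : Polynomial ℂ), E (F (k, p)) = 0 →
      ∀ L : List (ℕ × Polynomial ℂ), L.length ≤ n → (∀ q ∈ L, q.1 ≠ k) →
      (L.map Prod.fst).Chain' (· ≠ ·) →
      E (F (k, p) * (L.map F).prod) = 0 := by
    intro n
    induction n with
    | zero =>
      intro k p hp L hlen _ _
      have : L = [] := List.length_eq_zero_iff.mp (Nat.le_zero.mp hlen)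
      subst this
      simpa using hp
    | succ n ihn =>
      intro k p hp
      have inner : ∀ L₂ L₁ : List (ℕ × Polynomial ℂ),
          (∀ q ∈ L₁, E (F q) = 0) →
          (L₁ ++ L₂).length ≤ n + 1 →
          (∀ q ∈ L₁ ++ L₂, q.1 ≠ k) →
          ((L₁ ++ L₂).map Prod.fst).Chain' (· ≠ ·) →
          E (F (k, p) * ((L₁ ++ L₂).map F).prod) = 0 := by
        intro L₂
        induction L₂ with
        | nil =>
          intro L₁ hc hlen hne hch
          rcases eq_or_ne L₁ [] with h | h
          · subst h; simpa using hp
          · have := hfree' ((k, p) :: L₁) (by simp) ?_ ?_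
            · simpa using this
            · simp only [List.map_cons, List.Chain', List.isChain_cons]
              constructor
              · intro b hb
                obtain ⟨z, hz, hz2⟩ := List.mem_map.mp (List.mem_of_mem_head? hb)
                have := hne z (by simpa using hz)
                rw [hz2] at this
                exact (Ne.symm this)
              · simpa [List.Chain'] using hch
            · intro z hz
              rcases List.mem_cons.mp hz with h1 | h1
              · subst h1; exact hp
              · exact hc z h1
        | cons x L₂' ih =>
          intro L₁ hc hlen hne hch
          obtain ⟨a, q⟩ := x
          rw [hprodsplit L₁ L₂' a q, mul_add, map_add, mul_smul_comm, hEsmul]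
          have hfst : ∀ (r : Polynomial ℂ),
              ((L₁ ++ (a, r) :: L₂').map Prod.fst) = ((L₁ ++ (a, q) :: L₂').map Prod.fst) := by
            intro r; simp [List.map_append]
          have t1 : E (F (k, p) * ((L₁ ++ (a, q - Polynomial.C (E (F (a, q)))) :: L₂').map F).prod) = 0 := by
            have heq : L₁ ++ (a, q - Polynomial.C (E (F (a, q)))) :: L₂'
                = (L₁ ++ [(a, q - Polynomial.C (E (F (a, q))))]) ++ L₂' := by simp
            rw [heq]
            apply ih
            · intro z hz
              rcases List.mem_append.mp hz with h1 | h1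
              · exact hc z h1
              · have : z = (a, q - Polynomial.C (E (F (a, q)))) := by simpa using h1
                subst this; exact hcent a q
            · rw [← heq]; simpa [hfst] using hlen
            · rw [← heq]
              intro z hz
              rcases List.mem_append.mp hz with h1 | h1
              · exact hne z (List.mem_append.mpr (Or.inl h1))
              · rcases List.mem_cons.mp h1 with h2 | h2
                · have : z.1 = a := by rw [h2]
                  rw [this]
                  exact hne (a, q) (by simp)
                · exact hne z (by simp [h2])
            · rw [← heq, hfst]; exact hch
          have t2 : E (F (k, p) * ((L₁ ++ L₂').map F).prod) = 0 := by
            obtain ⟨M, hMp, hMc, hMm, hMl⟩ := hregroup (L₁ ++ L₂')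
            rw [← hMp]
            apply ihn k p hp M ?_ ?_ hMc
            · have hlen2 : (L₁ ++ L₂').length ≤ n := by
                simp only [List.length_append, List.length_cons] at hlen ⊢
                omega
              exact le_trans hMl hlen2
            · intro z hz
              obtain ⟨y, hy, hy2⟩ := List.mem_map.mp (hMm z hz)
              rw [← hy2]
              rcases List.mem_append.mp hy with h1 | h1
              · exact hne y (by simp [h1])
              · exact hne y (by simp [h1])
          rw [t1, t2, mul_zero, add_zero]
      intro L hlen hne hch
      have := inner L [] (by simp) (by simpa using hlen)
        (by intro z hz; exact hne z (by simpa using hz)) (by simpa using hch)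
      simpa using this
  have lemSq : ∀ (k : ℕ) (L : List (ℕ × Polynomial ℂ)), (∀ q ∈ L, q.1 ≠ k) →
      (L.map Prod.fst).Chain' (· ≠ ·) →
      E (X k * X k * (L.map F).prod) = E (X k * X k) * E ((L.map F).prod) := by
    intro k L hne hch
    have hxx : X k * X k = F (k, Polynomial.X ^ 2) := by simp [hFdef, pow_two]
    have hsplitF : F (k, Polynomial.X ^ 2)
        = F (k, Polynomial.X ^ 2 - Polynomial.C (E (F (k, Polynomial.X ^ 2))))
          + algebraMap ℂ A (E (F (k, Polynomial.X ^ 2))) := by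
      simp [hFdef]
    rw [hxx, hsplitF, add_mul, map_add,
      hL L.length k _ (hcent k (Polynomial.X ^ 2)) L le_rfl hne hch,
      Algebra.algebraMap_eq_smul_one, smul_mul_assoc, one_mul, hEsmul, zero_add,
      map_add, hcent k (Polynomial.X ^ 2), zero_add, hEsmul, hE1, mul_one]
  have hL2 : ∀ (n k : ℕ) (L₁ L₂ : List (ℕ × Polynomial ℂ)),
      L₁.length + L₂.length ≤ n →
      (∀ q ∈ L₁, q.1 ≠ k) → (∀ q ∈ L₂, q.1 ≠ k) →
      (L₁.map Prod.fst).Chain' (· ≠ ·) → (L₂.map Prod.fst).Chain' (· ≠ ·) →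
      E (X k * (L₁.map F).prod * (X k * (L₂.map F).prod))
        = E (X k * X k) * (E ((L₁.map F).prod) * E ((L₂.map F).prod)) := by
    -- base cases, valid for all n
    have base1 : ∀ (k : ℕ) (L₂ : List (ℕ × Polynomial ℂ)), (∀ q ∈ L₂, q.1 ≠ k) →
        (L₂.map Prod.fst).Chain' (· ≠ ·) →
        E (X k * (([] : List (ℕ × Polynomial ℂ)).map F).prod * (X k * (L₂.map F).prod))
          = E (X k * X k) * (E ((([] : List (ℕ × Polynomial ℂ)).map F).prod)
              * E ((L₂.map F).prod)) := by
      intro k L₂ hne hch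
      simp only [List.map_nil, List.prod_nil, mul_one]
      rw [← mul_assoc, lemSq k L₂ hne hch, hE1, one_mul]
    have base2 : ∀ (k : ℕ) (L₁ : List (ℕ × Polynomial ℂ)), (∀ q ∈ L₁, q.1 ≠ k) →
        (L₁.map Prod.fst).Chain' (· ≠ ·) →
        E (X k * (L₁.map F).prod * (X k * (([] : List (ℕ × Polynomial ℂ)).map F).prod))
          = E (X k * X k) * (E ((L₁.map F).prod)
              * E ((([] : List (ℕ × Polynomial ℂ)).map F).prod)) := by
      intro k L₁ hne hch
      simp only [List.map_nil, List.prod_nil, mul_one]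
      rw [hEtr, ← mul_assoc, lemSq k L₁ hne hch, hE1, mul_one]
    intro n
    induction n with
    | zero =>
      intro k L₁ L₂ hlen h1 h2 hc1 hc2
      have e1 : L₁ = [] := List.length_eq_zero_iff.mp (by omega)
      subst e1
      exact base1 k L₂ h2 hc2
    | succ n ihn =>
      intro k
      -- claim A: L₁ fully centered, center L₂ progressively
      have claimA : ∀ (L₂suf L₂pre L₁ : List (ℕ × Polynomial ℂ)),
          L₁ ≠ [] → (∀ q ∈ L₁, E (F q) = 0) → (∀ q ∈ L₂pre, E (F q) = 0) →
          L₂pre ++ L₂suf ≠ [] →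
          L₁.length + (L₂pre ++ L₂suf).length ≤ n + 1 →
          (∀ q ∈ L₁, q.1 ≠ k) → (∀ q ∈ L₂pre ++ L₂suf, q.1 ≠ k) →
          (L₁.map Prod.fst).Chain' (· ≠ ·) →
          ((L₂pre ++ L₂suf).map Prod.fst).Chain' (· ≠ ·) →
          E (X k * (L₁.map F).prod * (X k * ((L₂pre ++ L₂suf).map F).prod))
            = E (X k * X k)
              * (E ((L₁.map F).prod) * E (((L₂pre ++ L₂suf).map F).prod)) := by
        intro L₂suf
        induction L₂suf with
        | nil =>
          intro L₂pre L₁ h1ne h1c h2c h2ne hlen hk1 hk2 hch1 hch2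
          simp only [List.append_nil] at *
          -- RHS is zero
          have hr : E ((L₁.map F).prod) = 0 := hfree' L₁ h1ne hch1 h1c
          -- LHS is zero via freeness of the full word
          have hl : E (X k * (L₁.map F).prod * (X k * (L₂pre.map F).prod)) = 0 := by
            have key := hfree' ((k, Polynomial.X) :: (L₁ ++ (k, Polynomial.X) :: L₂pre))
              (by simp) ?_ ?_
            · have hprodeq :
                  ((((k, Polynomial.X) :: (L₁ ++ (k, Polynomial.X) :: L₂pre)).map F).prod)
                    = X k * (L₁.map F).prod * (X k * (L₂pre.map F).prod) := by
                simp only [List.map_cons, List.prod_cons, List.map_append, List.prod_append]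
                have hXk : F (k, Polynomial.X) = X k := hFX k
                rw [hXk, mul_assoc]
              rw [hprodeq] at key
              exact key
            · -- chain'
              show ((((k, Polynomial.X) :: (L₁ ++ (k, Polynomial.X) :: L₂pre)).map Prod.fst)).Chain' (· ≠ ·)
              have : (((k, Polynomial.X) :: (L₁ ++ (k, Polynomial.X) :: L₂pre)).map Prod.fst)
                  = (k :: L₁.map Prod.fst) ++ (k :: L₂pre.map Prod.fst) := by
                simp
              rw [this]
              rw [List.Chain', List.isChain_append]
              refine ⟨?_, ?_, ?_⟩
              · rw [List.isChain_cons]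
                refine ⟨?_, hch1⟩
                intro b hb
                obtain ⟨z, hz, hz2⟩ := List.mem_map.mp (List.mem_of_mem_head? hb)
                exact Ne.symm (hz2 ▸ hk1 z hz)
              · rw [List.isChain_cons]
                refine ⟨?_, hch2⟩
                intro b hb
                obtain ⟨z, hz, hz2⟩ := List.mem_map.mp (List.mem_of_mem_head? hb)
                exact Ne.symm (hz2 ▸ hk2 z hz)
              · intro x hx y hy
                have hy' : y = k := by simpa [eq_comm] using hy
                have hxne : L₁.map Prod.fst ≠ [] := by
                  simpa using h1ne
                obtain ⟨ys, z, hz⟩ := List.eq_nil_or_concat (L₁.map Prod.fst) |>.resolve_left hxne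
                rw [List.concat_eq_append] at hz
                rw [hz] at hx
                have : (k :: (ys ++ [z])).getLast? = some z := by
                  rw [show k :: (ys ++ [z]) = (k :: ys) ++ [z] by simp, List.getLast?_concat]
                rw [this] at hx
                have hxz : x = z := by simpa [eq_comm] using hx
                subst hxz; subst hy'
                have : x ∈ L₁.map Prod.fst := by rw [hz]; simp
                obtain ⟨w, hw, hw2⟩ := List.mem_map.mp this
                exact hw2 ▸ hk1 w hw
            · -- centered
              intro z hz
              rcases List.mem_cons.mp hz with h | h
              · subst h; exact hcX k
              · rcases List.mem_append.mp h with h' | h'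
                · exact h1c z h'
                · rcases List.mem_cons.mp h' with h'' | h''
                  · subst h''; exact hcX k
                  · exact h2c z h''
          rw [hl, hr]; ring
        | cons x L₂suf' ih =>
          intro L₂pre L₁ h1ne h1c h2c h2ne hlen hk1 hk2 hch1 hch2
          obtain ⟨a, q⟩ := x
          have hfst : ∀ r : Polynomial ℂ,
              ((L₂pre ++ (a, r) :: L₂suf').map Prod.fst)
                = ((L₂pre ++ (a, q) :: L₂suf').map Prod.fst) := by
            intro r; simp
          rw [hprodsplit L₂pre L₂suf' a q, mul_add, mul_add, map_add, mul_smul_comm,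
            mul_smul_comm, hEsmul, map_add, hEsmul]
          have t1 : E (X k * (L₁.map F).prod
                * (X k * (((L₂pre ++ (a, q - Polynomial.C (E (F (a, q)))) :: L₂suf').map F).prod)))
              = E (X k * X k)
                * (E ((L₁.map F).prod) * E (((L₂pre ++ (a, q - Polynomial.C (E (F (a, q)))) :: L₂suf').map F).prod)) := by
            have heq : L₂pre ++ (a, q - Polynomial.C (E (F (a, q)))) :: L₂suf' = (L₂pre ++ [(a, q - Polynomial.C (E (F (a, q))))]) ++ L₂suf' := by simp
            rw [heq]
            apply ih
            · exact h1ne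
            · exact h1c
            · intro z hz
              rcases List.mem_append.mp hz with h' | h'
              · exact h2c z h'
              · have : z = (a, q - Polynomial.C (E (F (a, q)))) := by simpa using h'
                subst this; exact hcent a q
            · simp
            · rw [← heq]
              simp only [List.length_append, List.length_cons] at hlen ⊢
              omega
            · exact hk1
            · rw [← heq]
              intro z hz
              rcases List.mem_append.mp hz with h' | h'
              · exact hk2 z (List.mem_append.mpr (Or.inl h'))
              · rcases List.mem_cons.mp h' with h'' | h''
                · have : z.1 = a := by rw [h'']
                  rw [this]; exact hk2 (a, q) (by simp)
                · exact hk2 z (by simp [h''])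
            · exact hch1
            · rw [← heq, hfst (q - Polynomial.C (E (F (a, q))))]; exact hch2
          have t2 : E (X k * (L₁.map F).prod * (X k * (((L₂pre ++ L₂suf').map F).prod)))
              = E (X k * X k)
                * (E ((L₁.map F).prod) * E (((L₂pre ++ L₂suf').map F).prod)) := by
            obtain ⟨M, hMp, hMc, hMm, hMl⟩ := hregroup (L₂pre ++ L₂suf')
            rw [← hMp]
            apply ihn k L₁ M
            · have : (L₂pre ++ (a, q) :: L₂suf').length = L₂pre.length + L₂suf'.length + 1 := by
                simp; omega
              have h2 : M.length ≤ L₂pre.length + L₂suf'.length := by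
                simpa using hMl
              omega
            · exact hk1
            · intro z hz
              obtain ⟨y, hy, hy2⟩ := List.mem_map.mp (hMm z hz)
              rw [← hy2]
              rcases List.mem_append.mp hy with h' | h'
              · exact hk2 y (by simp [h'])
              · exact hk2 y (by simp [h'])
            · exact hch1
            · exact hMc
          rw [t1, t2]
          ring
      -- claim B: center L₁ progressively
      have claimB : ∀ (L₁suf L₁pre : List (ℕ × Polynomial ℂ)),
          L₁pre ++ L₁suf ≠ [] → (∀ q ∈ L₁pre, E (F q) = 0) →
          ∀ L₂ : List (ℕ × Polynomial ℂ), L₂ ≠ [] →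
          (L₁pre ++ L₁suf).length + L₂.length ≤ n + 1 →
          (∀ q ∈ L₁pre ++ L₁suf, q.1 ≠ k) → (∀ q ∈ L₂, q.1 ≠ k) →
          ((L₁pre ++ L₁suf).map Prod.fst).Chain' (· ≠ ·) →
          (L₂.map Prod.fst).Chain' (· ≠ ·) →
          E (X k * ((L₁pre ++ L₁suf).map F).prod * (X k * (L₂.map F).prod))
            = E (X k * X k)
              * (E (((L₁pre ++ L₁suf).map F).prod) * E ((L₂.map F).prod)) := by
        intro L₁suf
        induction L₁suf with
        | nil =>
          intro L₁pre h1ne h1c L₂ h2ne hlen hk1 hk2 hch1 hch2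
          simp only [List.append_nil] at *
          have := claimA L₂ [] L₁pre h1ne h1c (by simp) (by simpa using h2ne)
            (by simpa using hlen) hk1 (by simpa using hk2) hch1 (by simpa using hch2)
          simpa using this
        | cons x L₁suf' ih =>
          intro L₁pre h1ne h1c L₂ h2ne hlen hk1 hk2 hch1 hch2
          obtain ⟨a, q⟩ := x
          have hfst : ∀ r : Polynomial ℂ,
              ((L₁pre ++ (a, r) :: L₁suf').map Prod.fst)
                = ((L₁pre ++ (a, q) :: L₁suf').map Prod.fst) := by
            intro r; simp
          rw [hprodsplit L₁pre L₁suf' a q, mul_add, add_mul, map_add, mul_smul_comm,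
            smul_mul_assoc, hEsmul, map_add, hEsmul]
          have t1 : E (X k * (((L₁pre ++ (a, q - Polynomial.C (E (F (a, q)))) :: L₁suf').map F).prod)
                * (X k * (L₂.map F).prod))
              = E (X k * X k)
                * (E (((L₁pre ++ (a, q - Polynomial.C (E (F (a, q)))) :: L₁suf').map F).prod) * E ((L₂.map F).prod)) := by
            have heq : L₁pre ++ (a, q - Polynomial.C (E (F (a, q)))) :: L₁suf' = (L₁pre ++ [(a, q - Polynomial.C (E (F (a, q))))]) ++ L₁suf' := by simp
            rw [heq]
            apply ih
            · simp
            · intro z hz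
              rcases List.mem_append.mp hz with h' | h'
              · exact h1c z h'
              · have : z = (a, q - Polynomial.C (E (F (a, q)))) := by simpa using h'
                subst this; exact hcent a q
            · exact h2ne
            · rw [← heq]
              simp only [List.length_append, List.length_cons] at hlen ⊢
              omega
            · rw [← heq]
              intro z hz
              rcases List.mem_append.mp hz with h' | h'
              · exact hk1 z (List.mem_append.mpr (Or.inl h'))
              · rcases List.mem_cons.mp h' with h'' | h''
                · have : z.1 = a := by rw [h'']
                  rw [this]; exact hk1 (a, q) (by simp)
                · exact hk1 z (by simp [h''])
            · exact hk2
            · rw [← heq, hfst (q - Polynomial.C (E (F (a, q))))]; exact hch1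
            · exact hch2
          have t2 : E (X k * (((L₁pre ++ L₁suf').map F).prod) * (X k * (L₂.map F).prod))
              = E (X k * X k)
                * (E (((L₁pre ++ L₁suf').map F).prod) * E ((L₂.map F).prod)) := by
            obtain ⟨M, hMp, hMc, hMm, hMl⟩ := hregroup (L₁pre ++ L₁suf')
            rw [← hMp]
            apply ihn k M L₂
            · have : (L₁pre ++ (a, q) :: L₁suf').length = L₁pre.length + L₁suf'.length + 1 := by
                simp; omega
              have h2 : M.length ≤ L₁pre.length + L₁suf'.length := by
                simpa using hMl
              omega
            · intro z hz
              obtain ⟨y, hy, hy2⟩ := List.mem_map.mp (hMm z hz)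
              rw [← hy2]
              rcases List.mem_append.mp hy with h' | h'
              · exact hk1 y (by simp [h'])
              · exact hk1 y (by simp [h'])
            · exact hk2
            · exact hMc
            · exact hch2
          rw [t1, t2]
          ring
      intro L₁ L₂ hlen h1 h2 hc1 hc2
      rcases eq_or_ne L₁ [] with he1 | he1
      · subst he1; exact base1 k L₂ h2 hc2
      rcases eq_or_ne L₂ [] with he2 | he2
      · subst he2; exact base2 k L₁ h1 hc1
      have := claimB L₁ [] (by simpa using he1) (by simp) L₂ he2
        (by simpa using hlen) (by simpa using h1) h2 (by simpa using hc1) hc2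
      simpa using this
  -- words as block lists
  have hword : ∀ l : List ℕ, ∃ L : List (ℕ × Polynomial ℂ),
      ((L.map F).prod = (l.map X).prod) ∧ (L.map Prod.fst).Chain' (· ≠ ·) ∧
      (∀ q ∈ L, q.1 ∈ l) := by
    intro l
    obtain ⟨L, hp, hc, hm, -⟩ := hregroup (l.map fun i => (i, Polynomial.X))
    refine ⟨L, ?_, hc, ?_⟩
    · rw [hp, List.map_map]
      congr 1
      apply List.map_congr_left
      intro i _
      simp [hFdef]
    · intro q hq
      have := hm q hq
      rw [List.map_map] at this
      simpa using this
  refine ⟨?_, ?_, ?_⟩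
  · -- part 1
    intro k l hl
    obtain ⟨L, hp, hc, hm⟩ := hword l
    have hX : X k = F (k, Polynomial.X) := by simp [hFdef]
    rw [← hp, hX]
    exact hL L.length k Polynomial.X (by simpa [hFdef] using hmean k) L le_rfl
      (fun q hq => hl q.1 (hm q hq)) hc
  · -- part 2
    intro k hk l hl
    obtain ⟨L, hp, hc, hm⟩ := hword l
    have hsq : X k ^ 2 = X k * X k := sq (X k)
    rw [← hp, hsq]
    exact lemSq k L (fun q hq => (hl q.1 (hm q hq)).ne) hc
  · -- part 3
    intro k hk l₁ l₂ h1 h2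
    obtain ⟨L₁, hp1, hc1, hm1⟩ := hword l₁
    obtain ⟨L₂, hp2, hc2, hm2⟩ := hword l₂
    have hsq : X k ^ 2 = X k * X k := sq (X k)
    rw [← hp1, ← hp2, hsq]
    rw [show X k * (L₁.map F).prod * X k * (L₂.map F).prod
        = X k * (L₁.map F).prod * (X k * (L₂.map F).prod) by noncomm_ring]
    rw [hL2 (L₁.length + L₂.length) k L₁ L₂ le_rfl
      (fun q hq => (h1 q.1 (hm1 q hq)).ne) (fun q hq => (h2 q.1 (hm2 q hq)).ne) hc1 hc2]
    ring
end

section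
/- Let (A, E) be a non-commutative probability space. Let X_1, …, X_l be self-adjoint elements with E(X_i) = 0 satisfying Condition A(1) (that is, E(X_k X_{i_1} ⋯ X_{i_r}) = 0 whenever k, i_1, …, i_r ∈ {1, …, l} and i_s ≠ k for all s). Let Y_{l+1}, …, Y_n be self-adjoint elements with E(Y_j) = 0 such that the family consisting of the unital subalgebra B generated by X_1, …, X_l together with the elements Y_{l+1}, …, Y_n is free, in the sense that E(a_1 ⋯ a_m) = 0 whenever each a_t is either an element of B or a complex polynomial evaluated at a single Y_j, E(a_t) = 0 for every t, and no two consecutive a_t, a_{t+1} both come from B or both come from the same Y_j. Define the combined sequence A_1, …, A_n by A_i = X_i for i ≤ l and A_i = Y_i for i > l. Then the sequence A_1, …, A_n satisfies Condition A(1): E(A_k A_{i_1} ⋯ A_{i_r}) = 0 whenever k, i_1, …, i_r ∈ {1, …, n} and i_s ≠ k for all s. -/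
open scoped ComplexOrder

namespace CondA1

variable {A : Type*} [Ring A] [Algebra ℂ A]

/-- Monomials in the `X i` with `i < l`, `i ≠ k`. -/
def Mset (X : ℕ → A) (l k : ℕ) : Set A :=
  {a | ∃ L : List ℕ, (∀ i ∈ L, i < l ∧ i ≠ k) ∧ a = (L.map X).prod}

/-- The span of those monomials. -/
def S (X : ℕ → A) (l k : ℕ) : Submodule ℂ A := Submodule.span ℂ (Mset X l k)

lemma one_mem_S (X : ℕ → A) (l k : ℕ) : (1 : A) ∈ S X l k :=
  Submodule.subset_span ⟨[], by simp, by simp⟩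

lemma mul_mem_S {X : ℕ → A} {l k : ℕ} {a b : A}
    (ha : a ∈ S X l k) (hb : b ∈ S X l k) : a * b ∈ S X l k := by
  have h : S X l k * S X l k ≤ S X l k := by
    rw [S, Submodule.span_mul_span]
    apply Submodule.span_le.mpr
    rintro x ⟨u, hu, v, hv, rfl⟩
    obtain ⟨L1, h1, rfl⟩ := hu
    obtain ⟨L2, h2, rfl⟩ := hv
    refine Submodule.subset_span ⟨L1 ++ L2, ?_, by simp⟩
    intro i hi
    rcases List.mem_append.mp hi with h | h
    · exact h1 i h
    · exact h2 i h
  exact h (Submodule.mul_mem_mul ha hb)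

lemma S_le_adjoin' (X : ℕ → A) (l k : ℕ) {a : A} (ha : a ∈ S X l k) :
    a ∈ Algebra.adjoin ℂ {a : A | ∃ i < l, a = X i} := by
  have hsub : Mset X l k ⊆ (Algebra.adjoin ℂ {a : A | ∃ i < l, a = X i} : Subalgebra ℂ A) := by
    rintro x ⟨L, hL, rfl⟩
    induction L with
    | nil => simpa using Subalgebra.one_mem _
    | cons i L ih =>
      simp only [List.map_cons, List.prod_cons]
      exact Subalgebra.mul_mem _ (Algebra.subset_adjoin ⟨i, (hL i (by simp)).1, rfl⟩)
        (ih fun j hj => hL j (by simp [hj]))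
  have h2 : S X l k ≤ Subalgebra.toSubmodule (Algebra.adjoin ℂ {a : A | ∃ i < l, a = X i}) :=
    Submodule.span_le.mpr hsub
  exact h2 ha

lemma E_Xk_S {X : ℕ → A} {l k : ℕ} (E : A →ₗ[ℂ] ℂ)
    (hA1 : ∀ k < l, ∀ L : List ℕ, (∀ i ∈ L, i < l) → (∀ i ∈ L, i ≠ k) →
      E (X k * (L.map X).prod) = 0)
    (hk : k < l) {s : A} (hs : s ∈ S X l k) : E (X k * s) = 0 := by
  induction hs using Submodule.span_induction with
  | mem x hx =>
    obtain ⟨L, hL, rfl⟩ := hx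
    exact hA1 k hk L (fun i hi => (hL i hi).1) (fun i hi => (hL i hi).2)
  | zero => simp
  | add x y _ _ hx hy => rw [mul_add, map_add, hx, hy, add_zero]
  | smul c x _ hx => rw [mul_smul_comm, map_smul, hx, smul_zero]

/-- A valid (tail) block: either a `B`-block or a polynomial in a single `Y j`, `j ≠ k`. -/
def P (X Y : ℕ → A) (l n k : ℕ) (q : Option ℕ × A) : Prop :=
  (q.1 = none ∧ q.2 ∈ S X l k) ∨
  (∃ j, q.1 = some j ∧ l ≤ j ∧ j < n ∧ j ≠ k ∧
    ∃ p : Polynomial ℂ, q.2 = Polynomial.aeval (Y j) p)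

/-- A valid head block. -/
def Hd (E : A →ₗ[ℂ] ℂ) (X Y : ℕ → A) (l n k : ℕ) (h : Option ℕ × A) : Prop :=
  E h.2 = 0 ∧
  ((k < l ∧ h.1 = none ∧ ∃ s ∈ S X l k, h.2 = X k * s) ∨
   (l ≤ k ∧ k < n ∧ h.1 = some k ∧ ∃ p : Polynomial ℂ, h.2 = Polynomial.aeval (Y k) p))

/-- Adjacent blocks must carry distinct labels. -/
def Rel : Option ℕ × A → Option ℕ × A → Prop := fun a b => a.1 ≠ b.1

omit [Ring A] [Algebra ℂ A] in
lemma chain_congr {l1 l2 : List (Option ℕ × A)}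
    (h : l1.map Prod.fst = l2.map Prod.fst) (hc : List.Chain' Rel l1) :
    List.Chain' Rel l2 := by
  have := (List.isChain_map (R := (· ≠ ·)) Prod.fst).mpr hc
  rw [h] at this
  exact (List.isChain_map (R := (· ≠ ·)) Prod.fst).mp this

section
variable (E : A →ₗ[ℂ] ℂ) (X Y : ℕ → A) (l n k : ℕ)
variable (hfree : ∀ L : List (Option ℕ × A), L ≠ [] →
      (L.map Prod.fst).Chain' (· ≠ ·) →
      (∀ q ∈ L,
        (q.1 = none ∧ q.2 ∈ Algebra.adjoin ℂ {a : A | ∃ i < l, a = X i}) ∨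
        (∃ j, q.1 = some j ∧ l ≤ j ∧ j < n ∧
          ∃ p : Polynomial ℂ, q.2 = Polynomial.aeval (Y j) p)) →
      (∀ q ∈ L, E q.2 = 0) →
      E ((L.map Prod.snd).prod) = 0)

include hfree in
lemma base' (h : Option ℕ × A) (C : List (Option ℕ × A))
    (hHd : Hd E X Y l n k h)
    (hC : ∀ q ∈ C, P X Y l n k q ∧ E q.2 = 0)
    (hch : List.Chain' Rel (h :: C)) :
    E (h.2 * (C.map Prod.snd).prod) = 0 := by
  have := hfree (h :: C) (by simp) ?_ ?_ ?_
  · simpa using this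
  · exact (List.isChain_map Prod.fst).mpr hch
  · rintro q hq
    rcases List.mem_cons.mp hq with rfl | hq
    · rcases hHd.2 with ⟨hk, h1, s, hs, h2⟩ | ⟨hk1, hk2, h1, p, h2⟩
      · refine Or.inl ⟨h1, ?_⟩
        rw [h2]
        exact Subalgebra.mul_mem _ (Algebra.subset_adjoin ⟨k, hk, rfl⟩) (S_le_adjoin' X l k hs)
      · exact Or.inr ⟨k, h1, hk1, hk2, p, h2⟩
    · rcases (hC q hq).1 with ⟨h1, h2⟩ | ⟨j, h1, h2, h3, _, p, h4⟩
      · exact Or.inl ⟨h1, S_le_adjoin' X l k h2⟩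
      · exact Or.inr ⟨j, h1, h2, h3, p, h4⟩
  · rintro q hq
    rcases List.mem_cons.mp hq with rfl | hq
    · exact hHd.1
    · exact (hC q hq).2
include hfree in
lemma aux (hE1 : E 1 = 1)
    (hEXk : k < l → ∀ s ∈ S X l k, E (X k * s) = 0) :
    ∀ N : ℕ, ∀ R C : List (Option ℕ × A), ∀ h : Option ℕ × A,
      (C ++ R).length ≤ N →
      Hd E X Y l n k h →
      (∀ q ∈ C, P X Y l n k q ∧ E q.2 = 0) →
      (∀ q ∈ R, P X Y l n k q) →
      List.Chain' Rel (h :: (C ++ R)) →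
      E (h.2 * ((C ++ R).map Prod.snd).prod) = 0 := by
  intro N
  induction N with
  | zero =>
    intro R C h hlen hHd hC hR hch
    have h0 : C ++ R = [] := List.length_eq_zero_iff.mp (Nat.le_zero.mp hlen)
    rw [h0]
    simpa using hHd.1
  | succ N ih =>
    intro R
    induction R with
    | nil =>
      intro C h hlen hHd hC hR hch
      rw [List.append_nil] at hch ⊢
      exact base' E X Y l n k hfree h C hHd hC hch
    | cons r R' ihR =>
      intro C h hlen hHd hC hR hch
      set c : ℂ := E r.2 with hc
      set r' : Option ℕ × A := (r.1, r.2 - c • 1) with hr'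
      have hsplit : h.2 * ((C ++ r :: R').map Prod.snd).prod
          = h.2 * ((C ++ r' :: R').map Prod.snd).prod
            + c • (h.2 * ((C ++ R').map Prod.snd).prod) := by
        simp only [List.map_append, List.prod_append, List.map_cons, List.prod_cons, hr']
        have e1 : r.2 * (R'.map Prod.snd).prod
            = (r.2 - c • (1:A)) * (R'.map Prod.snd).prod
              + c • (R'.map Prod.snd).prod := by
          rw [sub_mul, smul_mul_assoc, one_mul, sub_add_cancel]
        rw [e1, mul_add, mul_add, mul_smul_comm, mul_smul_comm]
      rw [hsplit, map_add, map_smul]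
      -- the two junction pieces of the original chain
      have hch2 : List.Chain' Rel ((h :: C) ++ r :: R') := hch
      obtain ⟨ch1, ch2, hj⟩ := List.isChain_append.mp hch2
      have term1 : E (h.2 * ((C ++ r' :: R').map Prod.snd).prod) = 0 := by
        have hlist : C ++ r' :: R' = (C ++ [r']) ++ R' := by simp
        rw [hlist]
        refine ihR (C ++ [r']) h ?_ hHd ?_ ?_ ?_
        · simp only [List.length_append, List.length_cons, List.length_nil] at hlen ⊢
          omega
        · intro q hq
          rcases List.mem_append.mp hq with hq | hq
          · exact hC q hq
          · rcases List.mem_singleton.mp hq with rfl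
            constructor
            · rcases hR r (by simp) with ⟨h1, h2⟩ | ⟨j, h1, h2, h3, h4, p, h5⟩
              · exact Or.inl ⟨h1, sub_mem h2 (Submodule.smul_mem _ c (one_mem_S X l k))⟩
              · refine Or.inr ⟨j, h1, h2, h3, h4, p - Polynomial.C c, ?_⟩
                rw [map_sub, Polynomial.aeval_C, ← h5, Algebra.algebraMap_eq_smul_one]
            · show E (r.2 - c • 1) = 0
              rw [map_sub, map_smul, hE1, smul_eq_mul, mul_one, hc, sub_self]
        · intro q hq
          exact hR q (by simp [hq])
        · refine chain_congr ?_ hch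
          simp [hr']
      rw [term1, zero_add, smul_eq_mul]
      -- second term
      rcases List.eq_nil_or_concat' C with rfl | ⟨C'', cl, rfl⟩
      · -- C = []
        cases R' with
        | nil =>
          simp only [List.nil_append, List.map_nil, List.prod_nil, mul_one, hHd.1, mul_zero]
        | cons r2 R'' =>
          by_cases hhr : h.1 = r2.1
          · -- merge h with r2
            obtain ⟨hE0, hcase⟩ := hHd
            rcases hcase with ⟨hkl, h1, s, hs, h2⟩ | ⟨hk1, hk2, h1, p, hp⟩
            · rcases hR r2 (by simp) with ⟨g1, g2⟩ | ⟨j, g1, -, -, -, -⟩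
              swap
              · rw [h1] at hhr; rw [← hhr] at g1; exact nomatch g1
              have hmerge : E ((h.1, h.2 * r2.2).2 * ((([] : List (Option ℕ × A)) ++ R'').map Prod.snd).prod) = 0 := by
                refine ih R'' [] (h.1, h.2 * r2.2) ?_ ?_ (by simp) ?_ ?_
                · simp only [List.length_append, List.length_cons, List.nil_append,
                    List.length_nil] at hlen ⊢
                  omega
                · constructor
                  · show E (h.2 * r2.2) = 0
                    rw [h2, mul_assoc]
                    exact hEXk hkl _ (mul_mem_S hs g2)
                  · exact Or.inl ⟨hkl, h1, s * r2.2, mul_mem_S hs g2,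
                      by show h.2 * r2.2 = X k * (s * r2.2); rw [h2, mul_assoc]⟩
                · intro q hq; exact hR q (by simp [hq])
                · simp only [List.nil_append]
                  have := ch2.tail
                  simp only [List.tail_cons] at this
                  refine chain_congr ?_ this
                  show (r2 :: R'').map Prod.fst = ((h.1, h.2 * r2.2) :: R'').map Prod.fst
                  simp [hhr]
              simp only [List.nil_append, List.map_cons, List.prod_cons] at hmerge ⊢
              rw [← mul_assoc, hmerge, mul_zero]
            · -- head is `some k`; no tail label can equal it
              exfalso
              rcases hR r2 (by simp) with ⟨g1, -⟩ | ⟨j, g1, -, -, hjk, -⟩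
              · rw [h1, g1] at hhr; exact nomatch hhr
              · rw [h1, g1] at hhr; exact hjk ((Option.some_injective _ hhr).symm)
          · -- no merge needed
            have : E (h.2 * ((([] : List (Option ℕ × A)) ++ r2 :: R'').map Prod.snd).prod) = 0 := by
              refine ih (r2 :: R'') [] h ?_ hHd (by simp) ?_ ?_
              · simp only [List.length_append, List.length_cons, List.nil_append,
                  List.length_nil] at hlen ⊢
                omega
              · intro q hq; exact hR q (by simp [hq])
              · simp only [List.nil_append]
                refine List.isChain_cons.mpr ⟨?_, ch2.tail⟩
                intro y hy
                simp only [List.head?_cons, Option.mem_def, Option.some.injEq] at hy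
                subst hy
                exact hhr
            simp only [List.nil_append, List.map_cons, List.prod_cons] at this ⊢
            rw [this, mul_zero]
      · -- C = C'' ++ [cl]
        have hclP := (hC cl (by simp)).1
        have hclE := (hC cl (by simp)).2
        cases R' with
        | nil =>
          have h0 : E (h.2 * (((C'' ++ [cl]) ++ ([] : List (Option ℕ × A))).map Prod.snd).prod) = 0 := by
            refine ih [] (C'' ++ [cl]) h ?_ hHd hC (by simp) ?_
            · simp only [List.length_append, List.length_cons, List.length_nil] at hlen ⊢
              omega
            · rw [List.append_nil]
              exact ch1
          rw [List.append_nil] at h0 ⊢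
          rw [h0, mul_zero]
        | cons r2 R'' =>
          by_cases hclr : cl.1 = r2.1
          · -- merge cl with r2
            set q : Option ℕ × A := (cl.1, cl.2 * r2.2) with hq
            have hPq : P X Y l n k q := by
              rcases hclP with ⟨h1, h2⟩ | ⟨j, h1, h2, h3, h4, p, h5⟩
              · rcases hR r2 (by simp) with ⟨g1, g2⟩ | ⟨j, g1, -, -, -, -⟩
                · exact Or.inl ⟨h1, mul_mem_S h2 g2⟩
                · rw [← hclr, h1] at g1; exact nomatch g1
              · rcases hR r2 (by simp) with ⟨g1, g2⟩ | ⟨j', g1, -, -, -, p', g5⟩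
                · rw [← hclr, h1] at g1; exact nomatch g1
                · have hjj : j = j' := by
                    rw [← hclr, h1] at g1
                    exact Option.some_injective _ g1
                  subst hjj
                  exact Or.inr ⟨j, h1, h2, h3, h4, p * p', by
                    show cl.2 * r2.2 = _
                    rw [h5, g5, map_mul]⟩
            have hmain : E (h.2 * ((C'' ++ q :: R'').map Prod.snd).prod) = 0 := by
              refine ih (q :: R'') C'' h ?_ hHd ?_ ?_ ?_
              · simp only [List.length_append, List.length_cons, List.length_nil] at hlen ⊢
                omega
              · intro x hx; exact hC x (by simp [hx])
              · intro x hx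
                rcases List.mem_cons.mp hx with rfl | hx
                · exact hPq
                · exact hR x (by simp [hx])
              · -- chain: h :: C'' ++ q :: R''
                have e : h :: (C'' ++ q :: R'') = (h :: C'' ++ [q]) ++ R'' := by simp
                rw [e]
                refine List.isChain_append.mpr ⟨?_, ?_, ?_⟩
                · refine chain_congr ?_ ch1
                  show (h :: (C'' ++ [cl])).map Prod.fst = _
                  simp [hq]
                · exact ch2.tail.tail
                · intro x hx y hy
                  have hx' : x = q := by
                    have : (h :: C'' ++ [q]).getLast? = some q :=
                      List.getLast?_concat
                    rw [this] at hx
                    exact (Option.mem_some_iff.mp hx).symm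
                  subst hx'
                  have hrel := (List.isChain_cons.mp ch2.tail).1 y hy
                  show q.1 ≠ y.1
                  rw [hq]
                  show cl.1 ≠ y.1
                  rw [hclr]
                  exact hrel
            have heq : (((C'' ++ [cl]) ++ r2 :: R'').map Prod.snd).prod
                = ((C'' ++ q :: R'').map Prod.snd).prod := by
              simp [hq, mul_assoc]
            rw [heq, hmain, mul_zero]
          · -- no merge
            have : E (h.2 * (((C'' ++ [cl]) ++ r2 :: R'').map Prod.snd).prod) = 0 := by
              refine ih (r2 :: R'') (C'' ++ [cl]) h ?_ hHd hC ?_ ?_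
              · simp only [List.length_append, List.length_cons, List.length_nil] at hlen ⊢
                omega
              · intro x hx; exact hR x (by simp [hx])
              · have e : h :: ((C'' ++ [cl]) ++ r2 :: R'') = (h :: (C'' ++ [cl])) ++ r2 :: R'' := by
                  simp
                rw [e]
                refine List.isChain_append.mpr ⟨ch1, ch2.tail, ?_⟩
                intro x hx y hy
                have hx' : x = cl := by
                  have : (h :: (C'' ++ [cl])).getLast? = some cl := by
                    rw [← List.cons_append]
                    exact List.getLast?_concat
                  rw [this] at hx
                  exact (Option.mem_some_iff.mp hx).symm
                subst hx'
                simp only [List.head?_cons, Option.mem_def, Option.some.injEq] at hy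
                subst hy
                exact hclr
            rw [this, mul_zero]


/-- Normalise a list of blocks: merge adjacent blocks with equal labels. -/
lemma norm2 : ∀ L : List (Option ℕ × A), (∀ q ∈ L, P X Y l n k q) →
    ∃ M : List (Option ℕ × A), (∀ q ∈ M, P X Y l n k q) ∧ List.Chain' Rel M ∧
      (M.map Prod.snd).prod = (L.map Prod.snd).prod ∧
      M.head?.map Prod.fst = L.head?.map Prod.fst := by
  intro L
  induction L with
  | nil => exact fun _ => ⟨[], by simp, List.isChain_nil, rfl, rfl⟩
  | cons q L' ih =>
    intro hL
    obtain ⟨M', hM'P, hM'c, hM'prod, hM'head⟩ := ih (fun x hx => hL x (by simp [hx]))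
    cases M' with
    | nil =>
      refine ⟨[q], ?_, List.isChain_singleton _, ?_, rfl⟩
      · intro x hx
        rw [List.mem_singleton.mp hx]
        exact hL q (by simp)
      · simp only [List.map_cons, List.map_nil, List.prod_cons, List.prod_nil] at hM'prod ⊢
        rw [← hM'prod, mul_one]
    | cons m M'' =>
      by_cases hqm : q.1 = m.1
      · -- merge q and m
        refine ⟨(q.1, q.2 * m.2) :: M'', ?_, ?_, ?_, rfl⟩
        · intro x hx
          rcases List.mem_cons.mp hx with rfl | hx
          · -- the merged block is valid
            rcases hL q (by simp) with ⟨h1, h2⟩ | ⟨j, h1, h2, h3, h4, p, h5⟩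
            · rcases hM'P m (by simp) with ⟨g1, g2⟩ | ⟨j, g1, -, -, -, -⟩
              · exact Or.inl ⟨h1, mul_mem_S h2 g2⟩
              · rw [hqm, g1] at h1; exact nomatch h1
            · rcases hM'P m (by simp) with ⟨g1, g2⟩ | ⟨j', g1, -, -, -, p', g5⟩
              · rw [hqm, g1] at h1; exact nomatch h1
              · have hjj : j = j' := by
                  have hss : some j = some j' := by rw [← h1, hqm, g1]
                  exact Option.some_injective _ hss
                subst hjj
                refine Or.inr ⟨j, h1, h2, h3, h4, p * p', ?_⟩
                show q.2 * m.2 = _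
                rw [h5, g5, map_mul]
          · exact hM'P x (by simp [hx])
        · refine List.isChain_cons.mpr ⟨?_, hM'c.tail⟩
          intro y hy
          have := (List.isChain_cons.mp hM'c).1 y hy
          show q.1 ≠ y.1
          rw [hqm]
          exact this
        · simp only [List.map_cons, List.prod_cons] at hM'prod ⊢
          rw [mul_assoc, hM'prod]
      · refine ⟨q :: m :: M'', ?_, ?_, ?_, rfl⟩
        · intro x hx
          rcases List.mem_cons.mp hx with h | hx
          · rw [h]; exact hL q (by simp)
          · exact hM'P x hx
        · refine List.isChain_cons.mpr ⟨?_, hM'c⟩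
          intro y hy
          simp only [List.head?_cons, Option.mem_def, Option.some.injEq] at hy
          subst hy
          exact hqm
        · simp only [List.map_cons, List.prod_cons] at hM'prod ⊢
          rw [hM'prod]

end
end CondA1

/-- Proposition `proposition_A1` of the paper.  Indexing is 0-based: `X i` for `i < l`
represents `X_{i+1}`, and `Y j` for `l ≤ j < n` represents `Y_{j+1}`.  The hypothesis
`hfree` expresses that the unital subalgebra `B` generated by the `X i` together with the
single elements `Y j` form a free family: alternating products of centered elements, each
taken either from `B` or a polynomial in a single `Y j` (with no two consecutive factors
from the same block), have zero expectation. -/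
theorem conditionA1_extension
    {A : Type*} [Ring A] [StarRing A] [Algebra ℂ A] [StarModule ℂ A]
    (E : A →ₗ[ℂ] ℂ)
    (hE1 : E 1 = 1)
    (hEpos : ∀ x : A, 0 ≤ E (star x * x))
    (hEtr : ∀ x y : A, E (x * y) = E (y * x))
    (l n : ℕ) (hln : l ≤ n)
    (X Y : ℕ → A)
    (hXsa : ∀ i < l, star (X i) = X i)
    (hXmean : ∀ i < l, E (X i) = 0)
    (hYsa : ∀ j, l ≤ j → j < n → star (Y j) = Y j)
    (hYmean : ∀ j, l ≤ j → j < n → E (Y j) = 0)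
    -- `X 0, …, X (l-1)` satisfy Condition A(1)
    (hA1 : ∀ k < l, ∀ L : List ℕ, (∀ i ∈ L, i < l) → (∀ i ∈ L, i ≠ k) →
      E (X k * (L.map X).prod) = 0)
    -- the subalgebra generated by the `X i` and the elements `Y j` are free
    (hfree : ∀ L : List (Option ℕ × A), L ≠ [] →
      (L.map Prod.fst).Chain' (· ≠ ·) →
      (∀ q ∈ L,
        (q.1 = none ∧ q.2 ∈ Algebra.adjoin ℂ {a : A | ∃ i < l, a = X i}) ∨
        (∃ j, q.1 = some j ∧ l ≤ j ∧ j < n ∧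
          ∃ p : Polynomial ℂ, q.2 = Polynomial.aeval (Y j) p)) →
      (∀ q ∈ L, E q.2 = 0) →
      E ((L.map Prod.snd).prod) = 0) :
    -- the combined sequence satisfies Condition A(1)
    ∀ k < n, ∀ L : List ℕ, (∀ i ∈ L, i < n) → (∀ i ∈ L, i ≠ k) →
      E ((if k < l then X k else Y k) *
        (L.map (fun i => if i < l then X i else Y i)).prod) = 0 := by
  intro k hk L hLn hLk
  classical
  set g : ℕ → Option ℕ × A := fun i => if i < l then ((none : Option ℕ), X i) else (some i, Y i)
    with hg
  have hsnd : (L.map (fun i => if i < l then X i else Y i)) = (L.map g).map Prod.snd := by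
    rw [List.map_map]
    have hfun : (fun i => if i < l then X i else Y i) = Prod.snd ∘ g := by
      funext i
      by_cases h : i < l <;> simp [hg, h]
    rw [hfun]
  have hPg : ∀ q ∈ L.map g, CondA1.P X Y l n k q := by
    intro q hq
    obtain ⟨i, hi, rfl⟩ := List.mem_map.mp hq
    by_cases h : i < l
    · exact Or.inl ⟨by simp [hg, h],
        Submodule.subset_span ⟨[i], by simp [h, hLk i hi], by simp [hg, h]⟩⟩
    · exact Or.inr ⟨i, by simp [hg, h], le_of_not_gt h, hLn i hi, hLk i hi, Polynomial.X,
        by simp [hg, h]⟩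
  obtain ⟨M, hMP, hMc, hMprod, hMhead⟩ := CondA1.norm2 X Y l n k (L.map g) hPg
  have hEXk : k < l → ∀ s ∈ CondA1.S X l k, E (X k * s) = 0 :=
    fun hkl s hs => CondA1.E_Xk_S E hA1 hkl hs
  set h0 : Option ℕ × A := if k < l then ((none : Option ℕ), X k) else (some k, Y k) with hh0
  have hHd : CondA1.Hd E X Y l n k h0 := by
    by_cases hkl : k < l
    · refine ⟨?_, Or.inl ⟨hkl, by simp [hh0, hkl], 1, CondA1.one_mem_S X l k, by simp [hh0, hkl]⟩⟩
      show E h0.2 = 0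
      simp only [hh0, if_pos hkl]
      exact hXmean k hkl
    · refine ⟨?_, Or.inr ⟨le_of_not_gt hkl, hk, by simp [hh0, hkl], Polynomial.X, ?_⟩⟩
      · show E h0.2 = 0
        simp only [hh0, if_neg hkl]
        exact hYmean k (le_of_not_gt hkl) hk
      · show h0.2 = _
        simp [hh0, hkl]
  have hfst : (if k < l then X k else Y k) = h0.2 := by
    by_cases hkl : k < l <;> simp [hh0, hkl]
  rw [hfst, hsnd, ← hMprod]
  cases M with
  | nil =>
    simp only [List.map_nil, List.prod_nil, mul_one]
    exact hHd.1
  | cons m M'' =>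
    by_cases hmg : h0.1 = m.1
    · rcases hMP m (by simp) with ⟨g1, g2⟩ | ⟨j, g1, -, -, hjk, -⟩
      · have hkl : k < l := by
          by_contra hkl
          rw [g1] at hmg
          simp [hh0, hkl] at hmg
        have key := CondA1.aux E X Y l n k hfree hE1 hEXk M''.length M'' []
          (h0.1, h0.2 * m.2) (by simp) ?_ (by simp)
          (fun q hq => hMP q (by simp [hq])) ?_
        · simp only [List.nil_append] at key
          simp only [List.map_cons, List.prod_cons, ← mul_assoc]
          exact key
        · constructor
          · show E (h0.2 * m.2) = 0
            have h02 : h0.2 = X k := by simp [hh0, hkl]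
            rw [h02]
            exact hEXk hkl m.2 g2
          · refine Or.inl ⟨hkl, by simp [hh0, hkl], m.2, g2, ?_⟩
            show h0.2 * m.2 = X k * m.2
            simp [hh0, hkl]
        · simp only [List.nil_append]
          refine CondA1.chain_congr ?_ hMc
          show (m :: M'').map Prod.fst = _
          simp [hmg]
      · exfalso
        rw [g1] at hmg
        by_cases hkl : k < l
        · simp [hh0, hkl] at hmg
        · simp only [hh0, if_neg hkl] at hmg
          exact hjk (Option.some_injective _ hmg).symm
    · have key := CondA1.aux E X Y l n k hfree hE1 hEXk (m :: M'').length (m :: M'') [] h0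
        (by simp) hHd (by simp) hMP ?_
      · simpa using key
      · simp only [List.nil_append]
        refine List.isChain_cons.mpr ⟨?_, hMc⟩
        intro y hy
        simp only [List.head?_cons, Option.mem_def, Option.some.injEq] at hy
        subst hy
        exact hmg
end

section
/- Let (A, E) be a non-commutative probability space and let X, Y ∈ A be self-adjoint. Then for every r ≥ 1 and all nonnegative integers m_1, …, m_r, n_1, …, n_r: |E(X^{m_1} Y^{n_1} ⋯ X^{m_r} Y^{n_r})| ≤ ∏_{i=1}^{r} [E(X^{2^r m_i})]^{2^{−r}} [E(Y^{2^r n_i})]^{2^{−r}}. (Here each E(X^{2^r m_i}) and E(Y^{2^r n_i}) is a nonnegative real number, since it is the expectation of an even power of a self-adjoint element.) -/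
open scoped ComplexOrder

set_option linter.unusedSectionVars false


namespace CSG

variable {A : Type*} [Ring A] [StarRing A] [Algebra ℂ A] [StarModule ℂ A]

lemma pos_re (E : A →ₗ[ℂ] ℂ) (hEpos : ∀ x : A, 0 ≤ E (star x * x)) (x : A) :
    0 ≤ (E (star x * x)).re := by
  have h := hEpos x
  rw [Complex.le_def] at h
  simpa using h.1

lemma pos_im (E : A →ₗ[ℂ] ℂ) (hEpos : ∀ x : A, 0 ≤ E (star x * x)) (x : A) :
    (E (star x * x)).im = 0 := by
  have h := hEpos x
  rw [Complex.le_def] at h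
  simpa using h.2.symm

lemma expand (E : A →ₗ[ℂ] ℂ) (x y : A) (t : ℂ) :
    E (star (x + t • y) * (x + t • y)) =
      E (star x * x) + t * E (star x * y) + (starRingEnd ℂ) t * E (star y * x) +
        ((starRingEnd ℂ) t * t) * E (star y * y) := by
  have hst : star (x + t • y) = star x + (starRingEnd ℂ) t • star y := by
    rw [star_add, star_smul, Complex.star_def]
  rw [hst, add_mul, mul_add, mul_add]
  simp only [smul_mul_assoc, mul_smul_comm, smul_smul, map_add, map_smul, smul_eq_mul]
  ring

lemma herm (E : A →ₗ[ℂ] ℂ) (hEpos : ∀ x : A, 0 ≤ E (star x * x)) (x y : A) :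
    E (star y * x) = (starRingEnd ℂ) (E (star x * y)) := by
  have h1 : (E (star x * y)).im + (E (star y * x)).im = 0 := by
    have h := pos_im E hEpos (x + (1 : ℂ) • y)
    rw [expand] at h
    simpa [Complex.add_im, pos_im E hEpos x, pos_im E hEpos y] using h
  have h2 : (E (star x * y)).re - (E (star y * x)).re = 0 := by
    have h := pos_im E hEpos (x + Complex.I • y)
    rw [expand] at h
    simp only [Complex.add_im, Complex.mul_im, Complex.conj_I, Complex.I_re, Complex.I_im,
      Complex.neg_re, Complex.neg_im, pos_im E hEpos x, pos_im E hEpos y] at h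
    ring_nf at h
    linarith
  apply Complex.ext
  · simp only [Complex.conj_re]; linarith
  · simp only [Complex.conj_im]; linarith

lemma cs (E : A →ₗ[ℂ] ℂ) (hEpos : ∀ x : A, 0 ≤ E (star x * x)) (x y : A) :
    ‖E (star x * y)‖ ^ 2 ≤ (E (star x * x)).re * (E (star y * y)).re := by
  have hp : 0 ≤ (E (star x * x)).re := pos_re E hEpos x
  have hq : 0 ≤ (E (star y * y)).re := pos_re E hEpos y
  set a := E (star x * y) with ha
  set p := (E (star x * x)).re with hpd
  set q := (E (star y * y)).re with hqd
  by_cases h0 : a = 0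
  · rw [h0]
    simpa using mul_nonneg hp hq
  have hc : 0 < Complex.normSq a := Complex.normSq_pos.mpr h0
  set c := Complex.normSq a with hcd
  have key : ∀ s : ℝ, 0 ≤ p + s * c + s * c + s ^ 2 * c * q := by
    intro s
    have h := pos_re E hEpos (x + ((s : ℂ) * (starRingEnd ℂ) a) • y)
    rw [expand] at h
    rw [herm E hEpos x y] at h
    have e1 : ((s : ℂ) * (starRingEnd ℂ) a) * a = ((s * c : ℝ) : ℂ) := by
      rw [mul_assoc, mul_comm ((starRingEnd ℂ) a) a, Complex.mul_conj]
      push_cast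
      ring
    have e2 : (starRingEnd ℂ) ((s : ℂ) * (starRingEnd ℂ) a) * (starRingEnd ℂ) a
        = ((s * c : ℝ) : ℂ) := by
      rw [map_mul, Complex.conj_conj, Complex.conj_ofReal, mul_assoc, Complex.mul_conj]
      push_cast
      ring
    have e3 : (starRingEnd ℂ) ((s : ℂ) * (starRingEnd ℂ) a) * ((s : ℂ) * (starRingEnd ℂ) a)
        = ((s ^ 2 * c : ℝ) : ℂ) := by
      rw [map_mul, Complex.conj_conj, Complex.conj_ofReal]
      have : (s : ℂ) * a * ((s : ℂ) * (starRingEnd ℂ) a) = ((s : ℂ) * (s : ℂ)) * (a * (starRingEnd ℂ) a) := by ring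
      rw [this, Complex.mul_conj]
      push_cast
      ring
    rw [e1, e2, e3] at h
    simp only [Complex.add_re, Complex.mul_re, Complex.ofReal_re, Complex.ofReal_im,
      zero_mul, mul_zero, sub_zero] at h
    linarith
  have goal' : c ≤ p * q := by
    by_cases hq0 : q = 0
    · exfalso
      have h := key (-(p + 1) / (2 * c))
      rw [hq0] at h
      have e : -(p + 1) / (2 * c) * c = -(p + 1) / 2 := by
        field_simp
      nlinarith
    · have hqpos : 0 < q := lt_of_le_of_ne hq (Ne.symm hq0)
      have h := key (-(1 / q))
      have e : p + (-(1 / q)) * c + (-(1 / q)) * c + (-(1 / q)) ^ 2 * c * q = p - c / q := by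
        field_simp
        ring
      rw [e] at h
      have : c / q ≤ p := by linarith
      calc c = (c / q) * q := (div_mul_cancel₀ c (ne_of_gt hqpos)).symm
        _ ≤ p * q := mul_le_mul_of_nonneg_right this hq
  rw [Complex.sq_norm]
  exact goal'

lemma cs' (E : A →ₗ[ℂ] ℂ) (hEpos : ∀ x : A, 0 ≤ E (star x * x)) (u w : A) :
    ‖E (u * w)‖ ^ 2 ≤ (E (u * star u)).re * (E (star w * w)).re := by
  have h := cs E hEpos (star u) w
  rwa [star_star] at h


-- ============ part 2 : helpers =============

lemma even_pow_re_nonneg (E : A →ₗ[ℂ] ℂ) (hEpos : ∀ x : A, 0 ≤ E (star x * x))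
    (t : A) (ht : star t = t) (k : ℕ) : 0 ≤ (E (t ^ (2 * k))).re := by
  have e : t ^ (2 * k) = star (t ^ k) * t ^ k := by
    rw [star_pow, ht, ← pow_add, two_mul]
  rw [e]
  exact pos_re E hEpos _

lemma pow_two_succ_re_nonneg (E : A →ₗ[ℂ] ℂ) (hEpos : ∀ x : A, 0 ≤ E (star x * x))
    (t : A) (ht : star t = t) (j : ℕ) : 0 ≤ (E (t ^ (2 ^ (j + 1)))).re := by
  have e : 2 ^ (j + 1) = 2 * 2 ^ j := by rw [pow_succ]; ring
  rw [e]
  exact even_pow_re_nonneg E hEpos t ht _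

noncomputable def F (E : A →ₗ[ℂ] ℂ) (j : ℕ) (t : A) : ℝ :=
  (E (t ^ (2 ^ (j + 1)))).re ^ (((2 : ℝ) ^ j)⁻¹)

lemma F_nonneg (E : A →ₗ[ℂ] ℂ) (hEpos : ∀ x : A, 0 ≤ E (star x * x))
    (j : ℕ) (t : A) (ht : star t = t) : 0 ≤ F E j t :=
  Real.rpow_nonneg (pow_two_succ_re_nonneg E hEpos t ht j) _

lemma F_mono (E : A →ₗ[ℂ] ℂ) (hE1 : E 1 = 1) (hEpos : ∀ x : A, 0 ≤ E (star x * x))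
    (j : ℕ) (t : A) (ht : star t = t) : F E j t ≤ F E (j + 1) t := by
  have hα : 0 ≤ (E (t ^ (2 ^ (j + 1)))).re := pow_two_succ_re_nonneg E hEpos t ht j
  have hsq : ((E (t ^ (2 ^ (j + 1)))).re) ^ 2 ≤ (E (t ^ (2 ^ (j + 2)))).re := by
    have h := cs E hEpos (t ^ (2 ^ (j + 1))) 1
    rw [star_pow, ht] at h
    have e1 : t ^ 2 ^ (j + 1) * 1 = t ^ 2 ^ (j + 1) := mul_one _
    have e2 : t ^ 2 ^ (j + 1) * t ^ 2 ^ (j + 1) = t ^ 2 ^ (j + 2) := by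
      rw [← pow_add]
      congr 1
      rw [pow_succ 2 (j + 1)]
      ring
    have e3 : star (1 : A) * 1 = 1 := by simp
    rw [e1, e2, e3, hE1] at h
    simp only [Complex.one_re, mul_one] at h
    have habs : (E (t ^ (2 ^ (j + 1)))).re ≤ ‖E (t ^ (2 ^ (j + 1)))‖ :=
      Complex.re_le_norm _
    nlinarith [norm_nonneg (E (t ^ (2 ^ (j + 1))))]
  have key : F E j t = ((E (t ^ (2 ^ (j + 1)))).re ^ 2) ^ (((2 : ℝ) ^ (j + 1))⁻¹) := by
    rw [F, ← Real.rpow_natCast ((E (t ^ (2 ^ (j + 1)))).re) 2, ← Real.rpow_mul hα]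
    congr 1
    push_cast
    rw [pow_succ]
    field_simp
  rw [key, F]
  exact Real.rpow_le_rpow (sq_nonneg _) hsq (by positivity)

lemma F_sq_half (E : A →ₗ[ℂ] ℂ) (hEpos : ∀ x : A, 0 ≤ E (star x * x))
    (j : ℕ) (B : A) (hB : star B = B) :
    (F E j (B ^ 2)) ^ ((2 : ℝ)⁻¹) = F E (j + 1) B := by
  have e1 : (B ^ 2) ^ (2 ^ (j + 1)) = B ^ (2 ^ (j + 2)) := by
    rw [← pow_mul]
    congr 1
    rw [pow_succ 2 (j + 1)]
    ring
  have hb : 0 ≤ (E (B ^ (2 ^ (j + 2)))).re := pow_two_succ_re_nonneg E hEpos B hB (j + 1)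
  rw [F, F, e1, ← Real.rpow_mul hb]
  congr 1
  rw [pow_succ]
  field_simp

lemma F_half (E : A →ₗ[ℂ] ℂ) (hEpos : ∀ x : A, 0 ≤ E (star x * x))
    (j : ℕ) (z : A) (hz : star z = z) :
    (F E j z) ^ ((2 : ℝ)⁻¹) = (E (z ^ (2 ^ (j + 1)))).re ^ (((2 : ℝ) ^ (j + 1))⁻¹) := by
  have hb : 0 ≤ (E (z ^ (2 ^ (j + 1)))).re := pow_two_succ_re_nonneg E hEpos z hz j
  rw [F, ← Real.rpow_mul hb]
  congr 1
  rw [pow_succ]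
  field_simp

lemma star_list_prod (L : List A) (h : ∀ z ∈ L, star z = z) :
    star L.prod = L.reverse.prod := by
  induction L with
  | nil => simp
  | cons a l ih =>
    rw [List.prod_cons, star_mul, ih (fun z hz => h z (List.mem_cons_of_mem _ hz)),
      h a (List.mem_cons_self), List.reverse_cons, List.prod_append, List.prod_cons,
      List.prod_nil, mul_one]

lemma map_prod_nonneg (L : List A) (f : A → ℝ) (h : ∀ z ∈ L, 0 ≤ f z) :
    0 ≤ (L.map f).prod := by
  induction L with
  | nil => simp
  | cons a l ih =>
    rw [List.map_cons, List.prod_cons]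
    exact mul_nonneg (h a (List.mem_cons_self))
      (ih (fun z hz => h z (List.mem_cons_of_mem _ hz)))

lemma map_prod_le (L : List A) (f g : A → ℝ) (hf : ∀ z ∈ L, 0 ≤ f z)
    (hfg : ∀ z ∈ L, f z ≤ g z) : (L.map f).prod ≤ (L.map g).prod := by
  induction L with
  | nil => simp
  | cons a l ih =>
    rw [List.map_cons, List.prod_cons, List.map_cons, List.prod_cons]
    have h1 : ∀ z ∈ l, 0 ≤ f z := fun z hz => hf z (List.mem_cons_of_mem _ hz)
    have h2 : ∀ z ∈ l, f z ≤ g z := fun z hz => hfg z (List.mem_cons_of_mem _ hz)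
    have hga : 0 ≤ g a := le_trans (hf a (List.mem_cons_self)) (hfg a (List.mem_cons_self))
    exact mul_le_mul (hfg a (List.mem_cons_self)) (ih h1 h2) (map_prod_nonneg l f h1) hga

lemma map_prod_rpow (L : List A) (f : A → ℝ) (hf : ∀ z ∈ L, 0 ≤ f z) (e : ℝ) :
    ((L.map f).prod) ^ e = (L.map fun z => (f z) ^ e).prod := by
  induction L with
  | nil => simp
  | cons a l ih =>
    rw [List.map_cons, List.prod_cons, List.map_cons, List.prod_cons,
      Real.mul_rpow (hf a (List.mem_cons_self))
        (map_prod_nonneg l f (fun z hz => hf z (List.mem_cons_of_mem _ hz))),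
      ih (fun z hz => hf z (List.mem_cons_of_mem _ hz))]

lemma sqrt_split {z b1 b2 r1 r2 : ℝ} (hz : 0 ≤ z) (hb2 : 0 ≤ b2) (hr1 : 0 ≤ r1)
    (hr2 : 0 ≤ r2) (h : z ^ 2 ≤ b1 * b2) (h1 : b1 ≤ r1) (h2 : b2 ≤ r2) :
    z ≤ r1 ^ ((2 : ℝ)⁻¹) * r2 ^ ((2 : ℝ)⁻¹) := by
  have hzr : z ^ 2 ≤ r1 * r2 := h.trans (mul_le_mul h1 h2 hb2 hr1)
  have hm := Real.rpow_le_rpow (sq_nonneg z) hzr (by norm_num : (0 : ℝ) ≤ 2⁻¹)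
  rw [Real.mul_rpow hr1 hr2] at hm
  calc z = (z ^ 2) ^ ((2 : ℝ)⁻¹) := by
        rw [← Real.rpow_natCast z 2, ← Real.rpow_mul hz]
        norm_num
    _ ≤ _ := hm


-- ============ part 3 : pole lemma =============

lemma pole (E : A →ₗ[ℂ] ℂ) (hE1 : E 1 = 1) (hEpos : ∀ x : A, 0 ≤ E (star x * x))
    (hEtr : ∀ x y : A, E (x * y) = E (y * x)) (p : ℕ) :
    ∀ (L : List A), L.length = p → (∀ t ∈ L, star t = t) →
      ∀ (B C : A), star B = B → star C = C →
      ‖E (B ^ 2 * L.prod * (C ^ 2 * L.reverse.prod))‖ ≤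
        F E (p + 1) B * F E (p + 1) C * (L.map (F E (p + 1))).prod := by
  induction p with
  | zero =>
    intro L hL hT B C hB hC
    have hLnil : L = [] := List.length_eq_zero_iff.mp hL
    subst hLnil
    simp only [List.prod_nil, List.reverse_nil, List.map_nil, mul_one]
    have hB2 : star (B ^ 2) = B ^ 2 := by rw [star_pow, hB]
    have hC2 : star (C ^ 2) = C ^ 2 := by rw [star_pow, hC]
    have key := cs' E hEpos (B ^ 2) (C ^ 2)
    have e1 : B ^ 2 * star (B ^ 2) = B ^ (2 ^ (0 + 1 + 1)) := by
      rw [hB2, ← pow_add]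
      norm_num
    have e2 : star (C ^ 2) * (C ^ 2) = C ^ (2 ^ (0 + 1 + 1)) := by
      rw [hC2, ← pow_add]
      norm_num
    rw [e1, e2] at key
    have h1 : 0 ≤ (E (B ^ 2 ^ (0 + 1 + 1))).re := pow_two_succ_re_nonneg E hEpos B hB (0 + 1)
    have h2 : 0 ≤ (E (C ^ 2 ^ (0 + 1 + 1))).re := pow_two_succ_re_nonneg E hEpos C hC (0 + 1)
    have main := sqrt_split (norm_nonneg _) h2 h1 h2 key (le_refl _) (le_refl _)
    rw [F, F]
    have einv : (((2 : ℝ) ^ (0 + 1))⁻¹) = ((2 : ℝ)⁻¹) := by norm_num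
    rw [einv]
    exact main
  | succ p ih =>
    intro L hL hT B C hB hC
    obtain ⟨t₁, L₂, hcons⟩ : ∃ t₁ L₂, L = t₁ :: L₂ := by
      cases L with
      | nil => simp at hL
      | cons a l => exact ⟨a, l, rfl⟩
    obtain ⟨L₁, tl, hconc⟩ : ∃ L₁ tl, L = L₁ ++ [tl] := by
      rcases List.eq_nil_or_concat L with hnil | ⟨L₁, tl, h⟩
      · rw [hnil] at hL; simp at hL
      · exact ⟨L₁, tl, by rw [h, List.concat_eq_append]⟩
    have hlen1 : L₁.length = p := by
      have := congrArg List.length hconc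
      simp at this
      omega
    have hlen2 : L₂.length = p := by
      have := congrArg List.length hcons
      simp [hL] at this
      omega
    have hT1 : ∀ z ∈ L₁, star z = z := fun z hz =>
      hT z (by rw [hconc]; exact List.mem_append_left _ hz)
    have hT2 : ∀ z ∈ L₂, star z = z := fun z hz =>
      hT z (by rw [hcons]; exact List.mem_cons_of_mem _ hz)
    have htl : star tl = tl := hT tl (by rw [hconc]; simp)
    have ht₁ : star t₁ = t₁ := hT t₁ (by rw [hcons]; simp)
    have hB2 : star (B ^ 2) = B ^ 2 := by rw [star_pow, hB]
    have hC2 : star (C ^ 2) = C ^ 2 := by rw [star_pow, hC]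
    have hP1 : L.prod = t₁ * L₂.prod := by rw [hcons, List.prod_cons]
    have hR1 : L.reverse.prod = L₂.reverse.prod * t₁ := by
      rw [hcons, List.reverse_cons, List.prod_append, List.prod_cons, List.prod_nil, mul_one]
    have hP2 : L.prod = L₁.prod * tl := by
      rw [hconc, List.prod_append, List.prod_cons, List.prod_nil, mul_one]
    have hR2 : L.reverse.prod = tl * L₁.reverse.prod := by
      rw [hconc, List.reverse_append]
      simp
    have hstarP : star L.prod = L.reverse.prod := star_list_prod L hT
    have hstarR : star L.reverse.prod = L.prod := by
      rw [star_list_prod L.reverse (fun z hz => hT z (List.mem_reverse.mp hz)),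
        List.reverse_reverse]
    have hstaru : star (B ^ 2 * L.prod) = L.reverse.prod * B ^ 2 := by
      rw [star_mul, hstarP, hB2]
    have hstarw : star (C ^ 2 * L.reverse.prod) = L.prod * C ^ 2 := by
      rw [star_mul, hstarR, hC2]
    have key := cs' E hEpos (B ^ 2 * L.prod) (C ^ 2 * L.reverse.prod)
    -- branch 1 identity
    have hb1eq : E ((B ^ 2 * L.prod) * star (B ^ 2 * L.prod))
        = E ((B ^ 2) ^ 2 * L₁.prod * (tl ^ 2 * L₁.reverse.prod)) := by
      rw [hstaru]
      have e1 : (B ^ 2 * L.prod) * (L.reverse.prod * B ^ 2)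
          = (B ^ 2 * (L.prod * L.reverse.prod)) * B ^ 2 := by
        simp only [mul_assoc]
      rw [e1, hEtr (B ^ 2 * (L.prod * L.reverse.prod)) (B ^ 2)]
      congr 1
      rw [hP2, hR2]
      simp only [pow_two, mul_assoc]
    -- branch 2 identity
    have hb2eq : E (star (C ^ 2 * L.reverse.prod) * (C ^ 2 * L.reverse.prod))
        = E (t₁ ^ 2 * L₂.prod * ((C ^ 2) ^ 2 * L₂.reverse.prod)) := by
      rw [hstarw]
      have e1 : (L.prod * C ^ 2) * (C ^ 2 * L.reverse.prod)
          = (t₁ * (L₂.prod * (C ^ 2 * (C ^ 2 * L₂.reverse.prod)))) * t₁ := by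
        rw [hP1, hR1]
        simp only [mul_assoc]
      rw [e1, hEtr _ t₁]
      congr 1
      simp only [pow_two, mul_assoc]
    -- apply IH
    have ih1 := ih L₁ hlen1 hT1 (B ^ 2) tl hB2 htl
    have ih2 := ih L₂ hlen2 hT2 t₁ (C ^ 2) ht₁ hC2
    -- reshape products
    have ePi1 : (L.map (F E (p + 1))).prod
        = (L₁.map (F E (p + 1))).prod * F E (p + 1) tl := by
      rw [hconc]
      simp
    have ePi2 : (L.map (F E (p + 1))).prod
        = F E (p + 1) t₁ * (L₂.map (F E (p + 1))).prod := by
      rw [hcons]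
      simp
    have hbr1 : (E ((B ^ 2 * L.prod) * star (B ^ 2 * L.prod))).re
        ≤ F E (p + 1) (B ^ 2) * (L.map (F E (p + 1))).prod := by
      have h1 : (E ((B ^ 2 * L.prod) * star (B ^ 2 * L.prod))).re
          ≤ ‖E ((B ^ 2) ^ 2 * L₁.prod * (tl ^ 2 * L₁.reverse.prod))‖ := by
        rw [← hb1eq]; exact Complex.re_le_norm _
      calc (E ((B ^ 2 * L.prod) * star (B ^ 2 * L.prod))).re
          ≤ F E (p + 1) (B ^ 2) * F E (p + 1) tl * (L₁.map (F E (p + 1))).prod :=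
            h1.trans ih1
        _ = F E (p + 1) (B ^ 2) * ((L₁.map (F E (p + 1))).prod * F E (p + 1) tl) := by ring
        _ = F E (p + 1) (B ^ 2) * (L.map (F E (p + 1))).prod := by rw [← ePi1]
    have hbr2 : (E (star (C ^ 2 * L.reverse.prod) * (C ^ 2 * L.reverse.prod))).re
        ≤ F E (p + 1) (C ^ 2) * (L.map (F E (p + 1))).prod := by
      have h1 : (E (star (C ^ 2 * L.reverse.prod) * (C ^ 2 * L.reverse.prod))).re
          ≤ ‖E (t₁ ^ 2 * L₂.prod * ((C ^ 2) ^ 2 * L₂.reverse.prod))‖ := by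
        rw [← hb2eq]; exact Complex.re_le_norm _
      calc (E (star (C ^ 2 * L.reverse.prod) * (C ^ 2 * L.reverse.prod))).re
          ≤ F E (p + 1) t₁ * F E (p + 1) (C ^ 2) * (L₂.map (F E (p + 1))).prod :=
            h1.trans ih2
        _ = F E (p + 1) (C ^ 2) * (F E (p + 1) t₁ * (L₂.map (F E (p + 1))).prod) := by ring
        _ = F E (p + 1) (C ^ 2) * (L.map (F E (p + 1))).prod := by rw [← ePi2]
    -- nonneg facts
    have hb2nonneg : 0 ≤ (E (star (C ^ 2 * L.reverse.prod) * (C ^ 2 * L.reverse.prod))).re :=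
      pos_re E hEpos _
    have hPi : 0 ≤ (L.map (F E (p + 1))).prod :=
      map_prod_nonneg _ _ (fun z hz => F_nonneg E hEpos _ z (hT z hz))
    have hFB : 0 ≤ F E (p + 1) (B ^ 2) := F_nonneg E hEpos _ _ hB2
    have hFC : 0 ≤ F E (p + 1) (C ^ 2) := F_nonneg E hEpos _ _ hC2
    have main := sqrt_split (norm_nonneg _) hb2nonneg
      (mul_nonneg hFB hPi) (mul_nonneg hFC hPi) key hbr1 hbr2
    have hsplit : (F E (p + 1) (B ^ 2) * (L.map (F E (p + 1))).prod) ^ ((2 : ℝ)⁻¹) *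
        (F E (p + 1) (C ^ 2) * (L.map (F E (p + 1))).prod) ^ ((2 : ℝ)⁻¹)
        = F E (p + 1 + 1) B * F E (p + 1 + 1) C *
          ((L.map (F E (p + 1))).prod ^ ((2 : ℝ)⁻¹) * (L.map (F E (p + 1))).prod ^ ((2 : ℝ)⁻¹)) := by
      rw [Real.mul_rpow hFB hPi, Real.mul_rpow hFC hPi, F_sq_half E hEpos (p + 1) B hB,
        F_sq_half E hEpos (p + 1) C hC]
      ring
    have hPiPi : (L.map (F E (p + 1))).prod ^ ((2 : ℝ)⁻¹) * (L.map (F E (p + 1))).prod ^ ((2 : ℝ)⁻¹)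
        = (L.map (F E (p + 1))).prod := by
      rw [← Real.rpow_add' hPi (by norm_num : ((2 : ℝ)⁻¹) + ((2 : ℝ)⁻¹) ≠ 0)]
      norm_num
    rw [hsplit, hPiPi] at main
    have hup : (L.map (F E (p + 1))).prod ≤ (L.map (F E (p + 1 + 1))).prod :=
      map_prod_le L _ _ (fun z hz => F_nonneg E hEpos _ z (hT z hz))
        (fun z hz => F_mono E hE1 hEpos (p + 1) z (hT z hz))
    calc ‖E (B ^ 2 * L.prod * (C ^ 2 * L.reverse.prod))‖
        ≤ F E (p + 1 + 1) B * F E (p + 1 + 1) C * (L.map (F E (p + 1))).prod := main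
      _ ≤ F E (p + 1 + 1) B * F E (p + 1 + 1) C * (L.map (F E (p + 1 + 1))).prod := by
          apply mul_le_mul_of_nonneg_left hup
          exact mul_nonneg (F_nonneg E hEpos _ _ hB) (F_nonneg E hEpos _ _ hC)


-- ============ part 4 : halving + main =============

lemma half_bound (E : A →ₗ[ℂ] ℂ) (hE1 : E 1 = 1) (hEpos : ∀ x : A, 0 ≤ E (star x * x))
    (hEtr : ∀ x y : A, E (x * y) = E (y * x)) (q : ℕ) (u : List A)
    (hul : u.length = q + 1) (hTu : ∀ z ∈ u, star z = z) :
    (E (u.prod * star u.prod)).re ≤ (u.map (F E q)).prod := by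
  have hstar : star u.prod = u.reverse.prod := star_list_prod u hTu
  cases q with
  | zero =>
    obtain ⟨z, hz⟩ : ∃ z, u = [z] := by
      cases u with
      | nil => simp at hul
      | cons a t =>
        cases t with
        | nil => exact ⟨a, rfl⟩
        | cons b t' => simp at hul
    subst hz
    have hz1 : star z = z := hTu z (by simp)
    simp only [List.prod_cons, List.prod_nil, mul_one, List.map_cons, List.map_nil]
    have e : z * star z = z ^ (2 ^ (0 + 1)) := by
      rw [hz1, ← pow_two]
      norm_num
    rw [e, F]
    have : (((2 : ℝ) ^ 0)⁻¹) = (1 : ℝ) := by norm_num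
    rw [this, Real.rpow_one]
  | succ q' =>
    obtain ⟨z₁, u', hcons⟩ : ∃ z₁ u', u = z₁ :: u' := by
      cases u with
      | nil => simp at hul
      | cons a t => exact ⟨a, t, rfl⟩
    obtain ⟨mid, zl, hconc⟩ : ∃ mid zl, u' = mid ++ [zl] := by
      rcases List.eq_nil_or_concat u' with hnil | ⟨mid, zl, h⟩
      · rw [hcons, hnil] at hul; simp at hul
      · exact ⟨mid, zl, by rw [h, List.concat_eq_append]⟩
    have hmidlen : mid.length = q' := by
      rw [hcons, hconc] at hul
      simp at hul
      omega
    have hz₁ : star z₁ = z₁ := hTu z₁ (by rw [hcons]; simp)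
    have hzl : star zl = zl := hTu zl (by rw [hcons, hconc]; simp)
    have hTmid : ∀ z ∈ mid, star z = z := fun z hz =>
      hTu z (by rw [hcons, hconc]; simp [hz])
    have e1 : u.prod * u.reverse.prod
        = (z₁ * (mid.prod * (zl * (zl * mid.reverse.prod)))) * z₁ := by
      rw [hcons, hconc]
      simp [List.prod_cons, List.prod_append, List.reverse_cons, List.reverse_append,
        mul_assoc]
    have heq : E (u.prod * star u.prod)
        = E (z₁ ^ 2 * mid.prod * (zl ^ 2 * mid.reverse.prod)) := by
      rw [hstar, e1, hEtr _ z₁]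
      congr 1
      simp only [pow_two, mul_assoc]
    have hpole := pole E hE1 hEpos hEtr q' mid hmidlen hTmid z₁ zl hz₁ hzl
    have hre : (E (u.prod * star u.prod)).re
        ≤ ‖E (z₁ ^ 2 * mid.prod * (zl ^ 2 * mid.reverse.prod))‖ := by
      rw [← heq]; exact Complex.re_le_norm _
    have emap : (u.map (F E (q' + 1))).prod
        = F E (q' + 1) z₁ * ((mid.map (F E (q' + 1))).prod * F E (q' + 1) zl) := by
      rw [hcons, hconc]
      simp
    calc (E (u.prod * star u.prod)).re
        ≤ F E (q' + 1) z₁ * F E (q' + 1) zl * (mid.map (F E (q' + 1))).prod :=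
          hre.trans hpole
      _ = F E (q' + 1) z₁ * ((mid.map (F E (q' + 1))).prod * F E (q' + 1) zl) := by ring
      _ = (u.map (F E (q' + 1))).prod := emap.symm

lemma main2 (E : A →ₗ[ℂ] ℂ) (hE1 : E 1 = 1) (hEpos : ∀ x : A, 0 ≤ E (star x * x))
    (hEtr : ∀ x y : A, E (x * y) = E (y * x)) (s : ℕ) (hs : 1 ≤ s) (L : List A)
    (hT : ∀ z ∈ L, star z = z) (hlen : L.length = 2 * s) :
    ‖E L.prod‖
      ≤ (L.map fun z => (E (z ^ (2 ^ s))).re ^ (((2 : ℝ) ^ s)⁻¹)).prod := by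
  obtain ⟨q, rfl⟩ : ∃ q, s = q + 1 := ⟨s - 1, by omega⟩
  obtain ⟨u, v, rfl, hul, hvl⟩ : ∃ u v, L = u ++ v ∧ u.length = q + 1 ∧ v.length = q + 1 := by
    refine ⟨L.take (q + 1), L.drop (q + 1), (List.take_append_drop _ L).symm, ?_, ?_⟩
    · rw [List.length_take, hlen]; omega
    · rw [List.length_drop, hlen]; omega
  have hTu : ∀ z ∈ u, star z = z := fun z hz => hT z (List.mem_append_left _ hz)
  have hTv : ∀ z ∈ v, star z = z := fun z hz => hT z (List.mem_append_right _ hz)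
  rw [List.prod_append, List.map_append, List.prod_append]
  have key := cs' E hEpos u.prod v.prod
  have hbr1 : (E (u.prod * star u.prod)).re ≤ (u.map (F E q)).prod :=
    half_bound E hE1 hEpos hEtr q u hul hTu
  have hb2eq : E (star v.prod * v.prod) = E (v.prod * star v.prod) := hEtr _ _
  have hbr2 : (E (star v.prod * v.prod)).re ≤ (v.map (F E q)).prod := by
    rw [hb2eq]
    exact half_bound E hE1 hEpos hEtr q v hvl hTv
  have hb2nonneg : 0 ≤ (E (star v.prod * v.prod)).re := pos_re E hEpos _
  have hPiu : 0 ≤ (u.map (F E q)).prod :=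
    map_prod_nonneg _ _ (fun z hz => F_nonneg E hEpos _ z (hTu z hz))
  have hPiv : 0 ≤ (v.map (F E q)).prod :=
    map_prod_nonneg _ _ (fun z hz => F_nonneg E hEpos _ z (hTv z hz))
  have main := sqrt_split (norm_nonneg _) hb2nonneg hPiu hPiv key hbr1 hbr2
  have hmapu : (u.map (F E q)).prod ^ ((2 : ℝ)⁻¹)
      = (u.map fun z => (E (z ^ (2 ^ (q + 1)))).re ^ (((2 : ℝ) ^ (q + 1))⁻¹)).prod := by
    rw [map_prod_rpow u (F E q) (fun z hz => F_nonneg E hEpos q z (hTu z hz))]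
    congr 1
    apply List.map_congr_left
    intro z hz
    exact F_half E hEpos q z (hTu z hz)
  have hmapv : (v.map (F E q)).prod ^ ((2 : ℝ)⁻¹)
      = (v.map fun z => (E (z ^ (2 ^ (q + 1)))).re ^ (((2 : ℝ) ^ (q + 1))⁻¹)).prod := by
    rw [map_prod_rpow v (F E q) (fun z hz => F_nonneg E hEpos q z (hTv z hz))]
    congr 1
    apply List.map_congr_left
    intro z hz
    exact F_half E hEpos q z (hTv z hz)
  rw [hmapu, hmapv] at main
  exact main

lemma flatMap_prod {ι : Type*} (l : List ι) (f g : ι → A) :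
    (l.flatMap fun i => [f i, g i]).prod = (l.map fun i => f i * g i).prod := by
  induction l with
  | nil => simp
  | cons a t ih => simp [ih, mul_assoc]

lemma flatMap_length {ι : Type*} (l : List ι) (f g : ι → A) :
    (l.flatMap fun i => [f i, g i]).length = 2 * l.length := by
  induction l with
  | nil => simp
  | cons a t ih => simp [ih]; omega

lemma flatMap_map_prod {ι : Type*} (l : List ι) (f g : ι → A) (h : A → ℝ) :
    ((l.flatMap fun i => [f i, g i]).map h).prod = (l.map fun i => h (f i) * h (g i)).prod := by
  induction l with
  | nil => simp
  | cons a t ih => simp [ih, mul_assoc]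

end CSG


/-- Generalized Cauchy–Schwarz inequality for traces
(Lemma `lemma_Cauchy_Schwartz_generalized` of the paper). -/
theorem cauchy_schwartz_generalized
    {A : Type*} [Ring A] [StarRing A] [Algebra ℂ A] [StarModule ℂ A]
    (E : A →ₗ[ℂ] ℂ)
    (hE1 : E 1 = 1)
    (hEpos : ∀ x : A, 0 ≤ E (star x * x))
    (hEtr : ∀ x y : A, E (x * y) = E (y * x))
    (X Y : A) (hX : star X = X) (hY : star Y = Y)
    (r : ℕ) (hr : 1 ≤ r) (m n : Fin r → ℕ) :
    ‖E (((List.finRange r).map fun i => X ^ (m i) * Y ^ (n i)).prod)‖ ≤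
      ∏ i : Fin r,
        (E (X ^ (2 ^ r * m i))).re ^ (((2 : ℝ) ^ r)⁻¹) *
        (E (Y ^ (2 ^ r * n i))).re ^ (((2 : ℝ) ^ r)⁻¹) := by
  have hprod : ((List.finRange r).map fun i => X ^ (m i) * Y ^ (n i)).prod
      = ((List.finRange r).flatMap fun i => [X ^ (m i), Y ^ (n i)]).prod :=
    (CSG.flatMap_prod _ _ _).symm
  have hlen : ((List.finRange r).flatMap fun i => [X ^ (m i), Y ^ (n i)]).length = 2 * r := by
    rw [CSG.flatMap_length]
    simp
  have hT : ∀ z ∈ (List.finRange r).flatMap fun i => [X ^ (m i), Y ^ (n i)], star z = z := by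
    intro z hz
    rw [List.mem_flatMap] at hz
    obtain ⟨i, _, hzi⟩ := hz
    simp only [List.mem_cons, List.mem_singleton, List.not_mem_nil, or_false] at hzi
    rcases hzi with h | h <;> rw [h, star_pow]
    · rw [hX]
    · rw [hY]
  have hmain := CSG.main2 E hE1 hEpos hEtr r hr _ hT hlen
  rw [hprod]
  refine hmain.trans_eq ?_
  rw [CSG.flatMap_map_prod]
  rw [Fin.prod_univ_def]
  congr 1
  apply List.map_congr_left
  intro i _
  have e1 : (X ^ (m i)) ^ (2 ^ r) = X ^ (2 ^ r * m i) := by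
    rw [← pow_mul, Nat.mul_comm]
  have e2 : (Y ^ (n i)) ^ (2 ^ r) = Y ^ (2 ^ r * n i) := by
    rw [← pow_mul, Nat.mul_comm]
  rw [e1, e2]
end

section
/- Let (A, E) be a non-commutative probability space and let v_1, …, v_N be self-adjoint elements with E(v_i) = 0 satisfying Condition A(1): E(v_k v_{i_1} ⋯ v_{i_r}) = 0 whenever k, i_1, …, i_r ∈ {1, …, N} and i_s ≠ k for all s. Suppose there is a nondecreasing sequence of reals (μ_k)_{k≥1} with μ_k ≥ 1 such that E(v_i^{2k}) ≤ μ_{2k} for all i and all k ≥ 1. Then for every even natural number r ≥ 2, E((v_1 + … + v_N)^r) ≤ (r/2)^r μ_{2r^2} N^{r/2}; equivalently, for Z = (v_1 + … + v_N)/√N one has E(Z^r) ≤ (r/2)^r μ_{2r^2}, a bound independent of N. -/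
open scoped ComplexOrder

set_option linter.unusedSectionVars false
set_option linter.unnecessarySimpa false
set_option maxHeartbeats 1000000

section NCAux
variable {A : Type*} [Ring A] [StarRing A] [Algebra ℂ A] [StarModule ℂ A]

lemma nc_im (E : A →ₗ[ℂ] ℂ) (hEpos : ∀ x : A, 0 ≤ E (star x * x)) (z : A) :
    (E (star z * z)).im = 0 ∧ 0 ≤ (E (star z * z)).re := by
  have h := Complex.le_def.mp (hEpos z)
  simpa using ⟨h.2.symm, h.1⟩

lemma nc_herm (E : A →ₗ[ℂ] ℂ) (hEpos : ∀ x : A, 0 ≤ E (star x * x)) (x y : A) :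
    E (star y * x) = (starRingEnd ℂ) (E (star x * y)) := by
  set a := E (star x * y) with ha
  set b := E (star y * x) with hb
  have key1 : a.im + b.im = 0 := by
    have h := (nc_im E hEpos (x + y)).1
    have hexp : star (x + y) * (x + y)
        = star x * x + (star x * y + star y * x) + star y * y := by
      rw [star_add, add_mul, mul_add, mul_add]; abel
    rw [hexp] at h
    simp only [map_add, Complex.add_im] at h
    have h1 := (nc_im E hEpos x).1
    have h2 := (nc_im E hEpos y).1
    rw [h1, h2] at h
    simpa [ha, hb] using h
  have key2 : a.re - b.re = 0 := by
    have h := (nc_im E hEpos (x + Complex.I • y)).1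
    have hexp : star (x + Complex.I • y) * (x + Complex.I • y)
        = star x * x + (Complex.I • (star x * y)
            + (-Complex.I) • (star y * x)) + star y * y := by
      have hstar : star (x + Complex.I • y) = star x + (-Complex.I) • star y := by
        rw [star_add, star_smul, Complex.star_def, Complex.conj_I]
      rw [hstar, add_mul, mul_add, mul_add]
      rw [mul_smul_comm, smul_mul_assoc, smul_mul_assoc, mul_smul_comm, smul_smul]
      have hI : (-Complex.I * Complex.I) = 1 := by
        rw [neg_mul, Complex.I_mul_I, neg_neg]
      rw [hI, one_smul]
      abel
    rw [hexp] at h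
    simp only [map_add, map_smul, Complex.add_im, smul_eq_mul] at h
    have h1 := (nc_im E hEpos x).1
    have h2 := (nc_im E hEpos y).1
    rw [h1, h2] at h
    simp only [Complex.mul_im, Complex.I_re, Complex.I_im, Complex.neg_re, Complex.neg_im,
      ← ha, ← hb] at h
    linarith
  have hre : b.re = a.re := by linarith
  have him : b.im = -a.im := by linarith
  apply Complex.ext
  · rw [Complex.conj_re]; exact hre
  · rw [Complex.conj_im]; exact him

lemma nc_cs (E : A →ₗ[ℂ] ℂ) (hEpos : ∀ x : A, 0 ≤ E (star x * x)) (x y : A) :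
    ‖E (star x * y)‖ ^ 2 ≤ (E (star x * x)).re * (E (star y * y)).re := by
  letI core : PreInnerProductSpace.Core ℂ A :=
    { inner := fun a b => E (star a * b)
      conj_inner_symm := fun a b => by
        show (starRingEnd ℂ) (E (star b * a)) = E (star a * b)
        rw [nc_herm E hEpos b a]
      re_inner_nonneg := fun a => by
        have := (nc_im E hEpos a).2
        simpa using this
      add_left := fun a b c => by
        show E (star (a + b) * c) = E (star a * c) + E (star b * c)
        rw [star_add, add_mul, map_add]
      smul_left := fun a b r => by
        show E (star (r • a) * b) = (starRingEnd ℂ) r * E (star a * b)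
        rw [star_smul, smul_mul_assoc, map_smul, Complex.star_def, smul_eq_mul] }
  letI : Inner ℂ A := core.toInner
  have h := InnerProductSpace.Core.inner_mul_inner_self_le (𝕜 := ℂ) (F := A) x y
  have hxy : (inner ℂ x y : ℂ) = E (star x * y) := rfl
  have hyx : (inner ℂ y x : ℂ) = E (star y * x) := rfl
  have hxx : (inner ℂ x x : ℂ) = E (star x * x) := rfl
  have hyy : (inner ℂ y y : ℂ) = E (star y * y) := rfl
  rw [hxy, hyx, hxx, hyy, nc_herm E hEpos x y] at h
  simp only [Complex.norm_conj, RCLike.re_to_complex] at h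
  calc ‖E (star x * y)‖ ^ 2
      = ‖E (star x * y)‖ * ‖E (star x * y)‖ := sq (‖E (star x * y)‖) ▸ by ring
    _ ≤ _ := h


lemma nc_star_prod (l : List A) (h : ∀ a ∈ l, star a = a) :
    star l.prod = l.reverse.prod := by
  induction l with
  | nil => simp
  | cons a t ih =>
    have ha : star a = a := h a List.mem_cons_self
    have ht : ∀ b ∈ t, star b = b := fun b hb => h b (List.mem_cons_of_mem _ hb)
    simp only [List.prod_cons, star_mul, ih ht, ha, List.reverse_cons,
      List.prod_append, List.prod_singleton, List.prod_nil, mul_one]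

lemma nc_rotE (E : A →ₗ[ℂ] ℂ) (hEtr : ∀ x y : A, E (x * y) = E (y * x))
    (l₁ l₂ : List A) : E ((l₁ ++ l₂).prod) = E ((l₂ ++ l₁).prod) := by
  rw [List.prod_append, List.prod_append, hEtr]

lemma nc_abs_state (E : A →ₗ[ℂ] ℂ) (hEpos : ∀ x : A, 0 ≤ E (star x * x)) (w : A) :
    ‖E (star w * w)‖ = (E (star w * w)).re := by
  obtain ⟨h1, h2⟩ := nc_im E hEpos w
  have : E (star w * w) = ((E (star w * w)).re : ℂ) := Complex.ext rfl (by simp [h1])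
  rw [this, Complex.norm_real, Real.norm_eq_abs, abs_of_nonneg h2]
  simp

lemma nc_word_cs (E : A →ₗ[ℂ] ℂ) (hEpos : ∀ x : A, 0 ≤ E (star x * x))
    (x y : List A) (hx : ∀ a ∈ x, star a = a) (hy : ∀ a ∈ y, star a = a) :
    ‖E ((x ++ y).prod)‖ ^ 2 ≤
      ‖E ((x ++ x.reverse).prod)‖ * ‖E ((y.reverse ++ y).prod)‖ := by
  have hxr : ∀ a ∈ x.reverse, star a = a := fun a ha => hx a (List.mem_reverse.mp ha)
  have hstar : star (x.reverse.prod) = x.prod := by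
    rw [nc_star_prod _ hxr, List.reverse_reverse]
  have hstary : star y.prod = y.reverse.prod := nc_star_prod _ hy
  have h := nc_cs E hEpos (x.reverse.prod) (y.prod)
  rw [hstar, hstary] at h
  have e1 : x.prod * y.prod = (x ++ y).prod := (List.prod_append).symm
  have e2 : x.prod * x.reverse.prod = (x ++ x.reverse).prod := (List.prod_append).symm
  have e3 : y.reverse.prod * y.prod = (y.reverse ++ y).prod := (List.prod_append).symm
  rw [e1, e2, e3] at h
  have a2 : (E ((x ++ x.reverse).prod)).re = ‖E ((x ++ x.reverse).prod)‖ := by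
    rw [← e2, ← hstar, ← nc_abs_state E hEpos]
  have a3 : (E ((y.reverse ++ y).prod)).re = ‖E ((y.reverse ++ y).prod)‖ := by
    rw [← e3, ← hstary, ← nc_abs_state E hEpos]
  rw [a2, a3] at h
  exact h


end NCAux

/-- length of the initial constant run -/
private def ncPr {α : Type*} [DecidableEq α] : List α → ℕ
  | [] => 0
  | (a :: t) => ((a :: t).takeWhile (fun b => decide (b = a))).length

/-- max constant run over all rotations -/
private def ncMrun {α : Type*} [DecidableEq α] (r : ℕ) (w : List α) : ℕ :=
  (Finset.range r).sup (fun k => ncPr (w.rotate k))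

private lemma ncPr_cons {α : Type*} [DecidableEq α] (a : α) (t : List α) :
    ncPr (a :: t) = (List.takeWhile (fun b => decide (b = a)) t).length + 1 := by
  show ((a :: t).takeWhile (fun b => decide (b = a))).length = _
  rw [List.takeWhile_cons_of_pos (by simp)]
  simp

private lemma ncPr_pos {α : Type*} [DecidableEq α] (w : List α) (hw : w ≠ []) :
    1 ≤ ncPr w := by
  cases w with
  | nil => exact absurd rfl hw
  | cons a t => rw [ncPr_cons]; omega

private lemma ncTw_rep {α : Type*} [DecidableEq α] (k : ℕ) (a : α) (w : List α) :
    k ≤ (List.takeWhile (fun b => decide (b = a)) (List.replicate k a ++ w)).length := by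
  induction k with
  | zero => simp
  | succ k ih =>
    have : List.replicate (k+1) a ++ w = a :: (List.replicate k a ++ w) := by
      simp [List.replicate_succ]
    rw [this, List.takeWhile_cons_of_pos (by simp)]
    simpa using Nat.succ_le_succ ih

private lemma ncPr_ge {α : Type*} [DecidableEq α] (k : ℕ) (hk : 0 < k) (a : α) (w : List α) :
    k ≤ ncPr (List.replicate k a ++ w) := by
  obtain ⟨k', rfl⟩ : ∃ k', k = k' + 1 := ⟨k - 1, by omega⟩
  have : List.replicate (k' + 1) a ++ w = a :: (List.replicate k' a ++ w) := by
    simp [List.replicate_succ]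
  rw [this, ncPr_cons]
  have := ncTw_rep (α := α) k' a w
  omega


section NCAux2
variable {A : Type*} [Ring A] [StarRing A] [Algebra ℂ A] [StarModule ℂ A]

lemma nc_chessboard (E : A →ₗ[ℂ] ℂ) (hEpos : ∀ x : A, 0 ≤ E (star x * x))
    (hEtr : ∀ x y : A, E (x * y) = E (y * x))
    {α : Type*} [Fintype α] [DecidableEq α] [Nonempty α]
    (u : α → A) (hu : ∀ i, star (u i) = u i) (n : ℕ) (hn : 1 ≤ n)
    (l : List α) (hl : l.length = n + n) :
    ‖E ((l.map u).prod)‖ ≤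
      Finset.univ.sup' Finset.univ_nonempty
        (fun i => ‖E (u i ^ (n + n))‖) := by
  classical
  set r := n + n with hrdef
  have hrpos : 0 < r := by omega
  -- the finite set of words of length r
  set S : Finset (List α) :=
    Finset.image (fun f : Fin r → α => List.ofFn f) Finset.univ with hSdef
  have memS : ∀ w : List α, w.length = r → w ∈ S := by
    intro w hw
    refine Finset.mem_image.mpr ⟨fun j : Fin r => w[(j : ℕ)]'(by omega), Finset.mem_univ _, ?_⟩
    apply List.ext_getElem
    · simp [hw]
    · intro i h1 h2
      simp
  have lenS : ∀ w ∈ S, w.length = r := by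
    intro w hw
    obtain ⟨f, -, rfl⟩ := Finset.mem_image.mp hw
    simp
  have hS : S.Nonempty := Finset.image_nonempty.mpr Finset.univ_nonempty
  set F : List α → ℝ := fun w => ‖E ((w.map u).prod)‖ with hFdef
  have hFnonneg : ∀ w, 0 ≤ F w := fun w => norm_nonneg _
  have hFrot : ∀ (w : List α) (k : ℕ), k ≤ w.length → F (w.rotate k) = F w := by
    intro w k hk
    rw [List.rotate_eq_drop_append_take hk]
    show ‖E (((w.drop k ++ w.take k).map u).prod)‖ = _
    rw [List.map_append, nc_rotE E hEtr, ← List.map_append, List.take_append_drop]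
  have hselfadj : ∀ (w : List α), ∀ a ∈ w.map u, star a = a := by
    intro w a ha
    obtain ⟨i, -, rfl⟩ := List.mem_map.mp ha
    exact hu i
  have hFcs : ∀ x y : List α, F (x ++ y) ^ 2 ≤ F (x ++ x.reverse) * F (y.reverse ++ y) := by
    intro x y
    have h := nc_word_cs E hEpos (x.map u) (y.map u) (hselfadj x) (hselfadj y)
    simpa only [hFdef, ← List.map_append, ← List.map_reverse] using h
  set Mv := S.sup' hS F with hMv
  have hle : ∀ w ∈ S, F w ≤ Mv := fun w hw => Finset.le_sup' F hw
  have key : ∃ i : α, Mv ≤ ‖E (u i ^ r)‖ := by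
    by_cases hM0 : Mv ≤ 0
    · exact ⟨Classical.arbitrary α, le_trans hM0 (norm_nonneg _)⟩
    push_neg at hM0
    -- the set of maximizers
    set T : Finset (List α) := S.filter (fun w => F w = Mv) with hTdef
    obtain ⟨w₀, hw₀S, hw₀⟩ := Finset.exists_mem_eq_sup' hS F
    have hTne : T.Nonempty := ⟨w₀, Finset.mem_filter.mpr ⟨hw₀S, hw₀.symm⟩⟩
    obtain ⟨g, hgT, hgmax⟩ := T.exists_max_image (ncMrun r) hTne
    have hgS : g ∈ S := (Finset.mem_filter.mp hgT).1
    have hgF : F g = Mv := (Finset.mem_filter.mp hgT).2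
    have hglen : g.length = r := lenS g hgS
    set m := ncMrun r g with hm
    obtain ⟨k₀, hk₀mem, hk₀⟩ := Finset.exists_mem_eq_sup (Finset.range r)
      ⟨0, Finset.mem_range.mpr hrpos⟩ (fun k => ncPr (g.rotate k))
    set l₀ := g.rotate k₀ with hl₀
    have hl₀len : l₀.length = r := by simp [hl₀, hglen]
    have hl₀F : F l₀ = Mv := by
      rw [hl₀, ← List.rotate_mod, hFrot g (k₀ % g.length) (Nat.le_of_lt (Nat.mod_lt _ (by omega))), hgF]
    have hprl₀ : ncPr l₀ = m := hk₀.symm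
    have hm1 : 1 ≤ m := by
      rw [← hprl₀]
      exact ncPr_pos l₀ (by intro h; rw [h] at hl₀len; simp at hl₀len; omega)
    -- structure of the initial run
    set a := l₀.head (by intro h; rw [h] at hl₀len; simp at hl₀len; omega) with hadef
    have hl₀cons : l₀ = a :: l₀.tail := (List.cons_head_tail _).symm
    set P : α → Bool := fun b => decide (b = a) with hPdef
    set tw := l₀.takeWhile P with htw
    set dw := l₀.dropWhile P with hdw
    have htwdw : tw ++ dw = l₀ := by
      rw [htw, hdw]; exact List.takeWhile_append_dropWhile
    have htwlen : tw.length = m := by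
      rw [← hprl₀, htw, hPdef]
      conv_lhs => rw [hl₀cons]
      conv_rhs => rw [hl₀cons]
      rfl
    have htwrep : tw = List.replicate m a := by
      refine List.eq_replicate_iff.mpr ⟨htwlen, ?_⟩
      intro b hb
      have := List.mem_takeWhile_imp hb
      simpa [hPdef] using this
    have hdwlen : dw.length = r - m := by
      have := congrArg List.length htwdw
      simp [htwlen, hl₀len] at this
      omega
    have hmr : m ≤ r := by
      have := congrArg List.length htwdw
      simp [htwlen, hl₀len] at this
      omega
    by_cases hmn : n ≤ m
    · -- the first half is constant
      have hxrep : l₀.take n = List.replicate n a := by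
        have h1 : l₀.take n = tw.take n := by
          conv_lhs => rw [← htwdw]
          rw [List.take_append]
          have : n - tw.length = 0 := by omega
          rw [this]
          simp
        rw [h1, htwrep, List.take_replicate, min_eq_left hmn]
      have hsplit : l₀ = l₀.take n ++ l₀.drop n := (List.take_append_drop _ _).symm
      have hcs := hFcs (l₀.take n) (l₀.drop n)
      rw [← hsplit, hl₀F] at hcs
      have hyS : ((l₀.drop n).reverse ++ l₀.drop n) ∈ S := by
        apply memS; simp [hl₀len] <;> omega
      have h2 : Mv ^ 2 ≤ F (l₀.take n ++ (l₀.take n).reverse) * Mv :=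
        le_trans hcs (mul_le_mul_of_nonneg_left (hle _ hyS) (hFnonneg _))
      have h3 : Mv ≤ F (l₀.take n ++ (l₀.take n).reverse) := by
        nlinarith [h2, hM0]
      refine ⟨a, le_trans h3 ?_⟩
      rw [hxrep, List.reverse_replicate, ← List.replicate_add]
      show ‖E (((List.replicate (n + n) a).map u).prod)‖ ≤ _
      rw [List.map_replicate, List.prod_replicate]
    · exfalso
      push_neg at hmn
      -- decompose the first half
      set z := dw.take (n - m) with hz
      have hzlen : z.length = n - m := by
        rw [hz, List.length_take, hdwlen]
        omega
      have hy'd : l₀.take n = List.replicate m a ++ z := by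
        conv_lhs => rw [← htwdw]
        rw [List.take_append, htwlen,
          List.take_of_length_le (le_of_lt (by omega : tw.length < n)), htwrep]
      set y' := l₀.take n with hy'
      set x' := l₀.drop n with hx'
      have hy'len : y'.length = n := by rw [hy', List.length_take]; omega
      have hx'len : x'.length = n := by rw [hx', List.length_drop]; omega
      have hrotn : l₀.rotate n = x' ++ y' := by
        rw [List.rotate_eq_drop_append_take (by omega)]
      have hFl₂ : F (x' ++ y') = Mv := by
        rw [← hrotn, hFrot l₀ n (by omega), hl₀F]
      have hcs := hFcs x' y'
      rw [hFl₂] at hcs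
      set c'' := y'.reverse ++ y' with hc''
      have hc''S : c'' ∈ S := by
        apply memS; simp [hc'', hy'len] <;> omega
      have hx'S : (x' ++ x'.reverse) ∈ S := by
        apply memS; simp [hx'len] <;> omega
      have h2 : Mv ^ 2 ≤ Mv * F c'' :=
        le_trans hcs (mul_le_mul_of_nonneg_right (hle _ hx'S) (hFnonneg _))
      have h3 : Mv ≤ F c'' := by
        nlinarith [h2, hM0]
      have hc''T : c'' ∈ T := Finset.mem_filter.mpr ⟨hc''S, le_antisymm (hle _ hc''S) h3⟩
      -- now show ncMrun r c'' > m
      have hrotc'' : c''.rotate (n - m) =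
          (List.replicate (m + m) a ++ (z ++ z.reverse)) := by
        have hc''eq : c'' = z.reverse ++ (List.replicate m a ++ (List.replicate m a ++ z)) := by
          rw [hc'']
          conv_lhs => rw [hy'd]
          rw [List.reverse_append, List.reverse_replicate]
          simp [List.append_assoc]
        rw [List.rotate_eq_drop_append_take (by simp [hc'', hy'len] <;> omega)]
        rw [hc''eq]
        have hzrevlen : z.reverse.length = n - m := by simp [hzlen]
        rw [List.drop_append_of_le_length (by omega), List.take_append_of_le_length (by omega)]
        rw [List.drop_of_length_le (by omega), List.take_of_length_le (by omega)]
        simp only [List.nil_append, List.append_nil]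
        rw [List.replicate_add]
        simp only [List.append_assoc]
      have hprge : m + m ≤ ncPr (c''.rotate (n - m)) := by
        rw [hrotc'']
        exact ncPr_ge (m + m) (by omega) a _
      have hmrunge : m + m ≤ ncMrun r c'' := by
        refine le_trans hprge ?_
        apply Finset.le_sup (f := fun k => ncPr (c''.rotate k))
        exact Finset.mem_range.mpr (by omega)
      have := hgmax c'' hc''T
      omega
  obtain ⟨i, hi⟩ := key
  have hlS : l ∈ S := memS l hl
  calc F l ≤ Mv := hle l hlS
    _ ≤ ‖E (u i ^ r)‖ := hi
    _ ≤ _ := Finset.le_sup' (fun i => ‖E (u i ^ (n+n))‖) (Finset.mem_univ i)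


lemma nc_pow_sum {N : ℕ} (v' : Fin N → A) (k : ℕ) :
    (∑ i, v' i) ^ k = ∑ f : Fin k → Fin N, ((List.ofFn f).map v').prod := by
  induction k with
  | zero => simp
  | succ k ih =>
    rw [pow_succ', ih]
    have e := Fin.consEquiv (fun _ : Fin (k+1) => Fin N)
    rw [← Equiv.sum_comp (Fin.consEquiv (fun _ : Fin (k+1) => Fin N))
      (fun g : Fin (k+1) → Fin N => ((List.ofFn g).map v').prod)]
    have hcons : ∀ (p : Fin N × (Fin k → Fin N)),
        ((List.ofFn ((Fin.consEquiv (fun _ : Fin (k+1) => Fin N)) p)).map v').prod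
          = v' p.1 * ((List.ofFn p.2).map v').prod := by
      rintro ⟨i, f⟩
      simp [Fin.consEquiv, List.ofFn_succ, Fin.cons_zero, Fin.cons_succ]
    rw [Finset.sum_congr rfl (fun p _ => hcons p), Fintype.sum_prod_type]
    rw [Finset.sum_mul]
    exact Finset.sum_congr rfl (fun i _ => Finset.mul_sum _ _ _)

end NCAux2

/-- Lemma `moment_bound0` of the paper.  Indexing is 0-based: `v i` for `i < N`
represents `v_{i+1}`.  For an even power `r ≥ 2`,
`E((v_1 + … + v_N)^r) ≤ (r/2)^r μ_{2r²} N^{r/2}`, and equivalently, for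
`Z = (v_1 + … + v_N)/√N`, `E(Z^r) ≤ (r/2)^r μ_{2r²}`, a bound independent of `N`. -/
theorem moment_bound0
    {A : Type*} [Ring A] [StarRing A] [Algebra ℂ A] [StarModule ℂ A]
    (E : A →ₗ[ℂ] ℂ)
    (hE1 : E 1 = 1)
    (hEpos : ∀ x : A, 0 ≤ E (star x * x))
    (hEtr : ∀ x y : A, E (x * y) = E (y * x))
    (N : ℕ) (v : ℕ → A)
    (hsa : ∀ i < N, star (v i) = v i)
    (hmean : ∀ i < N, E (v i) = 0)
    -- Condition A(1)
    (hA1 : ∀ k < N, ∀ L : List ℕ, (∀ i ∈ L, i < N) → (∀ i ∈ L, i ≠ k) →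
      E (v k * (L.map v).prod) = 0)
    -- a nondecreasing sequence of moment bounds, each `≥ 1`
    (μ : ℕ → ℝ)
    (hμmono : ∀ j k, 1 ≤ j → j ≤ k → μ j ≤ μ k)
    (hμ1 : ∀ k, 1 ≤ k → 1 ≤ μ k)
    (hmom : ∀ i < N, ∀ k, 1 ≤ k → E (v i ^ (2 * k)) ≤ ((μ (2 * k) : ℂ)))
    (r : ℕ) (hr : 2 ≤ r) (hre : Even r) :
    E ((∑ i ∈ Finset.range N, v i) ^ r) ≤
      ((((r : ℝ) / 2) ^ r * μ (2 * r ^ 2) * (N : ℝ) ^ (r / 2) : ℝ) : ℂ) ∧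
    E ((((Real.sqrt N : ℝ) : ℂ)⁻¹ • ∑ i ∈ Finset.range N, v i) ^ r) ≤
      ((((r : ℝ) / 2) ^ r * μ (2 * r ^ 2) : ℝ) : ℂ) := by
  classical
  obtain ⟨n, hn⟩ := hre
  have hn1 : 1 ≤ n := by omega
  have hr2 : r / 2 = n := by omega
  have hrr : 1 ≤ 2 * r ^ 2 := by nlinarith
  have hμpos : (1:ℝ) ≤ μ (2 * r ^ 2) := hμ1 _ hrr
  have hC0 : (0:ℝ) ≤ ((r:ℝ)/2) ^ r * μ (2 * r ^ 2) :=
    mul_nonneg (pow_nonneg (by positivity) r) (le_trans zero_le_one hμpos)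
  rcases Nat.eq_zero_or_pos N with hN | hN
  · subst hN
    simp only [Finset.range_zero, Finset.sum_empty]
    rw [zero_pow (by omega : r ≠ 0), smul_zero, zero_pow (by omega : r ≠ 0), map_zero]
    constructor
    · have hz : (((r:ℝ)/2) ^ r * μ (2 * r ^ 2) * ((0:ℕ):ℝ) ^ (r/2) : ℝ) = 0 := by
        rw [hr2]
        simp [zero_pow (by omega : n ≠ 0)]
      rw [hz]
      simp
    · exact_mod_cast hC0
  -- main case
  haveI : NeZero N := ⟨by omega⟩
  set u : Fin N → A := fun i => v (i : ℕ) with hu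
  have husa : ∀ i : Fin N, star (u i) = u i := fun i => hsa i i.isLt
  set S := ∑ i ∈ Finset.range N, v i with hS
  have hSu : S = ∑ i : Fin N, u i := (Fin.sum_univ_eq_sum_range (fun i => v i) N).symm
  set W : (Fin r → Fin N) → A := fun f => ((List.ofFn f).map u).prod with hW
  have hexp : S ^ r = ∑ f : Fin r → Fin N, W f := by rw [hSu, nc_pow_sum]
  have hsaS : star S = S := by
    rw [hSu, star_sum]
    exact Finset.sum_congr rfl (fun i _ => husa i)
  have hSsq : S ^ r = star (S ^ n) * S ^ n := by
    rw [star_pow, hsaS, ← pow_add, ← hn]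
  have hSrpos : 0 ≤ E (S ^ r) := by rw [hSsq]; exact hEpos _
  have him : (E (S ^ r)).im = 0 := by
    have := (Complex.le_def.mp hSrpos).2
    simpa using this.symm
  -- per-word bound
  have hword : ∀ f : Fin r → Fin N, ‖E (W f)‖ ≤ μ r := by
    intro f
    have hlen : (List.ofFn f).length = n + n := by simp [← hn]
    have hcb := nc_chessboard E hEpos hEtr u husa n hn1 (List.ofFn f) hlen
    refine le_trans hcb ?_
    rw [Finset.sup'_le_iff]
    intro i _
    have h2n : u i ^ (n + n) = star (u i ^ n) * u i ^ n := by
      rw [star_pow, husa i, ← pow_add]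
    have habs : ‖E (u i ^ (n + n))‖ = (E (u i ^ (n + n))).re := by
      rw [h2n]
      exact nc_abs_state E hEpos _
    have hmom' := hmom (i : ℕ) i.isLt n hn1
    have h2n' : 2 * n = n + n := by omega
    rw [h2n'] at hmom'
    have hrle : (E (u i ^ (n + n))).re ≤ μ (n + n) := by
      have := (Complex.le_def.mp hmom').1
      simpa using this
    rw [habs, hn]
    exact hrle
  -- surviving words
  set Surv : Finset (Fin r → Fin N) :=
    Finset.univ.filter (fun f => ∀ a ∈ List.ofFn f, 2 ≤ (List.ofFn f).count a) with hSurv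
  have hvanish : ∀ f : Fin r → Fin N, f ∉ Surv → E (W f) = 0 := by
    intro f hf
    rw [hSurv, Finset.mem_filter] at hf
    push_neg at hf
    obtain ⟨a, ha, hc⟩ := hf (Finset.mem_univ f)
    have hc1 : (List.ofFn f).count a = 1 := by
      have := List.count_pos_iff.mpr ha
      omega
    obtain ⟨s, t, hst⟩ := List.append_of_mem ha
    have hs0 : s.count a = 0 ∧ t.count a = 0 := by
      rw [hst, List.count_append, List.count_cons] at hc1
      simp at hc1
      omega
    have hanots : a ∉ s := List.count_eq_zero.mp hs0.1
    have hanott : a ∉ t := List.count_eq_zero.mp hs0.2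
    have hWf : W f = ((s.map u).prod) * (u a * (t.map u).prod) := by
      rw [hW]
      simp only [hst, List.map_append, List.prod_append, List.map_cons, List.prod_cons]
    rw [hWf, hEtr, mul_assoc]
    have hprod : (t.map u).prod * (s.map u).prod = ((((t ++ s).map Fin.val)).map v).prod := by
      rw [List.map_map, ← List.prod_append, ← List.map_append]
      rfl
    rw [hprod]
    apply hA1 (a : ℕ) a.isLt
    · intro i hi
      rw [List.mem_map] at hi
      obtain ⟨j, hj, rfl⟩ := hi
      exact j.isLt
    · intro i hi
      rw [List.mem_map] at hi
      obtain ⟨j, hj, rfl⟩ := hi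
      have hja : j ≠ a := by
        intro h
        subst h
        rcases List.mem_append.mp hj with h | h
        exacts [hanott h, hanots h]
      exact fun h => hja (Fin.val_injective h)
  have hsum0 : E (S ^ r) = ∑ f ∈ Surv, E (W f) := by
    rw [hexp, map_sum]
    exact (Finset.sum_subset (Finset.filter_subset _ _)
      (fun f _ hf => hvanish f hf)).symm
  -- image cardinality of surviving words
  have himg : ∀ f ∈ Surv, (Finset.image f Finset.univ).card ≤ n := by
    intro f hf
    have hcount := (Finset.mem_filter.mp hf).2
    set l := List.ofFn f with hl
    have hlen : l.length = r := by simp [hl]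
    have hsumcount : ∑ a ∈ l.toFinset, l.count a = r := by
      have hms := Multiset.toFinset_sum_count_eq (l : Multiset (Fin N))
      simpa [hlen] using hms
    have h2card : 2 * l.toFinset.card ≤ r := by
      have : ∑ a ∈ l.toFinset, 2 ≤ ∑ a ∈ l.toFinset, l.count a :=
        Finset.sum_le_sum (fun a ha => hcount a (List.mem_toFinset.mp ha))
      rw [Finset.sum_const, smul_eq_mul] at this
      omega
    have himgeq : Finset.image f Finset.univ = l.toFinset := by
      ext a
      simp [hl, List.mem_toFinset, List.mem_ofFn, Set.mem_range, eq_comm]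
    rw [himgeq]
    omega
  -- injection for counting
  set Φ : (Fin r → Fin N) → ((Fin r → Fin n) × (Fin n → Fin N)) := fun f =>
    if h : (Finset.image f Finset.univ).card ≤ n then
      (fun j => Fin.castLE h (((Finset.image f Finset.univ).orderIsoOfFin rfl).symm
          ⟨f j, Finset.mem_image_of_mem f (Finset.mem_univ j)⟩),
       fun t => if ht : (t : ℕ) < (Finset.image f Finset.univ).card then
          (((Finset.image f Finset.univ).orderIsoOfFin rfl) ⟨(t : ℕ), ht⟩ : Fin N)
        else ⟨0, hN⟩)
    else (fun _ => ⟨0, by omega⟩, fun _ => ⟨0, hN⟩) with hΦ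
  have hrec : ∀ f, (Finset.image f Finset.univ).card ≤ n →
      ∀ j, (Φ f).2 ((Φ f).1 j) = f j := by
    intro f h j
    rw [hΦ]
    simp only [dif_pos h]
    have hlt : ((Fin.castLE h (((Finset.image f Finset.univ).orderIsoOfFin rfl).symm
        ⟨f j, Finset.mem_image_of_mem f (Finset.mem_univ j)⟩) : Fin n) : ℕ)
        < (Finset.image f Finset.univ).card := by
      simp only [Fin.coe_castLE]
      exact Fin.isLt _
    rw [dif_pos hlt]
    have : (⟨((Fin.castLE h (((Finset.image f Finset.univ).orderIsoOfFin rfl).symm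
        ⟨f j, Finset.mem_image_of_mem f (Finset.mem_univ j)⟩) : Fin n) : ℕ), hlt⟩ :
          Fin (Finset.image f Finset.univ).card)
        = ((Finset.image f Finset.univ).orderIsoOfFin rfl).symm
            ⟨f j, Finset.mem_image_of_mem f (Finset.mem_univ j)⟩ := by
      apply Fin.ext
      simp
    rw [this]
    simp
  have hcard : Surv.card ≤ n ^ r * N ^ n := by
    have hinj : Set.InjOn Φ Surv := by
      intro f hf g hg hfg
      funext j
      have h1 := hrec f (himg f hf) j
      have h2 := hrec g (himg g hg) j
      rw [← h1, ← h2, hfg]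
    have := Finset.card_le_card_of_injOn Φ (fun f _ => Finset.mem_univ (Φ f)) hinj
    calc Surv.card ≤ (Finset.univ : Finset ((Fin r → Fin n) × (Fin n → Fin N))).card := this
      _ = n ^ r * N ^ n := by
        rw [Finset.card_univ, Fintype.card_prod, Fintype.card_fun, Fintype.card_fun]
        simp
  -- real-part bound
  have hμr0 : (0:ℝ) ≤ μ r := le_trans zero_le_one (hμ1 r (by omega))
  have hre1 : (E (S ^ r)).re ≤ (Surv.card : ℝ) * μ r := by
    rw [hsum0]
    rw [Complex.re_sum]
    calc ∑ f ∈ Surv, (E (W f)).re ≤ ∑ f ∈ Surv, μ r :=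
          Finset.sum_le_sum (fun f _ => le_trans (Complex.re_le_norm _) (hword f))
      _ = (Surv.card : ℝ) * μ r := by rw [Finset.sum_const, nsmul_eq_mul]
  have hμr : μ r ≤ μ (2 * r ^ 2) := hμmono r _ (by omega) (by nlinarith)
  have hrebound : (E (S ^ r)).re ≤ (n:ℝ) ^ r * μ (2 * r ^ 2) * (N:ℝ) ^ n := by
    calc (E (S ^ r)).re ≤ (Surv.card : ℝ) * μ r := hre1
      _ ≤ ((n ^ r * N ^ n : ℕ) : ℝ) * μ (2 * r ^ 2) := by
          apply mul_le_mul (by exact_mod_cast hcard) hμr hμr0 (by positivity)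
      _ = (n:ℝ) ^ r * μ (2 * r ^ 2) * (N:ℝ) ^ n := by push_cast; ring
  have hrhalf : ((r:ℝ)/2) = (n:ℝ) := by
    have : (r:ℝ) = 2 * (n:ℝ) := by rw [hn]; push_cast; ring
    rw [this]; ring
  have hcastRHS : (((r:ℝ)/2) ^ r * μ (2 * r ^ 2) * (N : ℝ) ^ (r / 2) : ℝ)
      = (n:ℝ) ^ r * μ (2 * r ^ 2) * (N:ℝ) ^ n := by
    rw [hrhalf, hr2]
  have hconc1 : E (S ^ r) ≤
      ((((r:ℝ)/2) ^ r * μ (2 * r ^ 2) * (N : ℝ) ^ (r / 2) : ℝ) : ℂ) := by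
    rw [Complex.le_def]
    constructor
    · rw [Complex.ofReal_re, hcastRHS]
      exact hrebound
    · rw [him, Complex.ofReal_im]
  refine ⟨hconc1, ?_⟩
  -- second statement
  have hNpow0 : ((N:ℝ) ^ n) ≠ 0 := by positivity
  have hcpow : (((Real.sqrt N : ℝ) : ℂ))⁻¹ ^ r = ((((N:ℝ) ^ n)⁻¹ : ℝ) : ℂ) := by
    rw [inv_pow, ← Complex.ofReal_pow, ← Complex.ofReal_inv]
    congr 2
    rw [hn, show n + n = 2 * n by ring, pow_mul, Real.sq_sqrt (by positivity : (0:ℝ) ≤ (N:ℝ))]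
  have hLHS2 : E (((((Real.sqrt N : ℝ) : ℂ))⁻¹ • S) ^ r)
      = ((((N:ℝ) ^ n)⁻¹ : ℝ) : ℂ) * E (S ^ r) := by
    rw [smul_pow, map_smul, smul_eq_mul, hcpow]
  rw [hLHS2]
  have hnn : (0:ℂ) ≤ ((((N:ℝ) ^ n)⁻¹ : ℝ) : ℂ) := by
    rw [Complex.le_def]
    constructor
    · simp only [Complex.zero_re, Complex.ofReal_re]
      positivity
    · rw [Complex.zero_im, Complex.ofReal_im]
  have hmul := mul_le_mul_of_nonneg_left hconc1 hnn
  refine le_trans hmul ?_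
  rw [← Complex.ofReal_mul]
  rw [Complex.le_def]
  constructor
  · simp only [Complex.ofReal_re]
    rw [hcastRHS]
    have : ((N:ℝ) ^ n)⁻¹ * ((n:ℝ) ^ r * μ (2 * r ^ 2) * (N:ℝ) ^ n)
        = (n:ℝ) ^ r * μ (2 * r ^ 2) := by
      field_simp
    rw [this, hrhalf]
  · rw [Complex.ofReal_im, Complex.ofReal_im]
end

section
/- Let (A, E) be a non-commutative probability space, let N ≥ 1 be an integer, and let X, Z ∈ A be self-adjoint. Suppose there are real numbers B_j ≥ 1 and μ_j ≥ 1 (for j ≥ 0, with B_0 = μ_0 = 1) such that E(Z^{2j}) ≤ B_j and E(X^{2j}) ≤ μ_j N^{−j} for all j ≥ 0. Let r ≥ 1 and let m_1, …, m_r, n_1, …, n_r be nonnegative integers with n_1 + … + n_r ≥ 3. Then |E(Z^{m_1} X^{n_1} ⋯ Z^{m_r} X^{n_r})| ≤ (∏_{i=1}^{r} B_{2^{r−1} m_i}^{2^{−r}} μ_{2^{r−1} n_i}^{2^{−r}}) · N^{−3/2}. -/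
open scoped ComplexOrder
set_option linter.unusedSectionVars false
set_option linter.unusedVariables false
set_option maxHeartbeats 1000000

namespace MMaux

variable {A : Type*} [Ring A] [StarRing A] [Algebra ℂ A] [StarModule ℂ A]
variable (E : A →ₗ[ℂ] ℂ)

lemma pos_re (hEpos : ∀ x : A, 0 ≤ E (star x * x)) (x : A) :
    0 ≤ (E (star x * x)).re := by
  have := hEpos x; rw [Complex.le_def] at this; simpa using this.1

lemma pos_im (hEpos : ∀ x : A, 0 ≤ E (star x * x)) (x : A) :
    (E (star x * x)).im = 0 := by
  have := hEpos x; rw [Complex.le_def] at this; simpa using this.2.symm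

lemma her (hE1 : E 1 = 1) (hEpos : ∀ x : A, 0 ≤ E (star x * x)) (x : A) :
    E (star x) = starRingEnd ℂ (E x) := by
  have e1 : star (1 + x) * (1 + x) = 1 + x + star x + star x * x := by
    rw [star_add, star_one, add_mul, one_mul, mul_add, mul_one]; abel
  have h1 : (E x).im + (E (star x)).im = 0 := by
    have := pos_im E hEpos (1 + x)
    rw [e1] at this
    simp only [map_add, Complex.add_im] at this
    rw [hE1, pos_im E hEpos x] at this
    simpa using this
  have e2 : star (1 + Complex.I • x) * (1 + Complex.I • x)
      = 1 + Complex.I • x + (-Complex.I) • star x + star x * x := by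
    rw [star_add, star_one, star_smul, add_mul, one_mul, mul_add, mul_one,
      smul_mul_smul_comm]
    simp only [Complex.star_def, Complex.conj_I, neg_mul, Complex.I_mul_I,
      neg_neg, one_smul]
    abel
  have h2 : (E x).re - (E (star x)).re = 0 := by
    have := pos_im E hEpos (1 + Complex.I • x)
    rw [e2] at this
    simp only [map_add, map_smul, Complex.add_im, smul_eq_mul] at this
    rw [hE1, pos_im E hEpos x] at this
    simp only [Complex.one_im, Complex.mul_im, Complex.I_re, Complex.I_im,
      Complex.neg_re, Complex.neg_im] at this
    linarith
  apply Complex.ext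
  · simp only [Complex.conj_re]; linarith
  · simp only [Complex.conj_im]; linarith

lemma cs0 (hE1 : E 1 = 1) (hEpos : ∀ x : A, 0 ≤ E (star x * x)) (x y : A) :
    ‖E (star x * y)‖ ^ 2 ≤ (E (star x * x)).re * (E (star y * y)).re := by
  set z := E (star x * y) with hzdef
  set p := (E (star x * x)).re with hpdef
  set q := (E (star y * y)).re with hqdef
  have hp : 0 ≤ p := pos_re E hEpos x
  have hq : 0 ≤ q := pos_re E hEpos y
  have key : ∀ s : ℝ, 0 ≤ p - 2 * s * Complex.normSq z + s ^ 2 * Complex.normSq z * q := by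
    intro s
    set t : ℂ := (s : ℂ) * (starRingEnd ℂ z) with htdef
    have hw := pos_re E hEpos (x - t • y)
    have ew : star (x - t • y) * (x - t • y)
        = star x * x - (starRingEnd ℂ t) • (star y * x) - t • (star x * y)
          + (t * starRingEnd ℂ t) • (star y * y) := by
      rw [star_sub, star_smul, sub_mul, mul_sub, mul_sub]
      simp only [smul_mul_assoc, mul_smul_comm, smul_smul, Complex.star_def]
      abel
    rw [ew] at hw
    have hyx : E (star y * x) = starRingEnd ℂ z := by
      have h' : star y * x = star (star x * y) := by rw [star_mul, star_star]
      rw [h', her E hE1 hEpos]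
    simp only [map_add, map_sub, map_smul, smul_eq_mul, hyx] at hw
    have ht0 : (starRingEnd ℂ z) * z = ((Complex.normSq z : ℝ) : ℂ) := by
      rw [mul_comm, Complex.mul_conj]
    have ht1 : t * z = ((s * Complex.normSq z : ℝ) : ℂ) := by
      rw [htdef, mul_assoc, ht0]
      push_cast; ring
    have ht2 : (starRingEnd ℂ t) * (starRingEnd ℂ z) = ((s * Complex.normSq z : ℝ) : ℂ) := by
      rw [htdef, map_mul, Complex.conj_conj, Complex.conj_ofReal, mul_assoc, Complex.mul_conj]
      push_cast; ring
    have ht3 : t * (starRingEnd ℂ t) = ((s ^ 2 * Complex.normSq z : ℝ) : ℂ) := by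
      rw [mul_comm]
      rw [htdef, map_mul, Complex.conj_conj, Complex.conj_ofReal]
      have : (s:ℂ) * z * ((s:ℂ) * (starRingEnd ℂ z)) = (s:ℂ)^2 * (z * starRingEnd ℂ z) := by ring
      rw [this, Complex.mul_conj]
      push_cast; ring
    rw [ht1, ht2, ht3] at hw
    simp only [Complex.sub_re, Complex.add_re, Complex.ofReal_re, Complex.mul_re,
      Complex.ofReal_im, pos_im E hEpos y, zero_mul, sub_zero, mul_zero] at hw
    rw [← hpdef, ← hqdef] at hw
    linarith
  rw [Complex.sq_norm]
  rcases eq_or_lt_of_le (Complex.normSq_nonneg z) with hz0 | hz0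
  · rw [← hz0]; exact mul_nonneg hp hq
  rcases eq_or_lt_of_le hq with hq0 | hq0
  · exfalso
    have h1 := key ((p + 1) / (2 * Complex.normSq z))
    rw [← hq0] at h1
    have h2 : 2 * ((p + 1) / (2 * Complex.normSq z)) * Complex.normSq z = p + 1 := by
      field_simp
    rw [h2] at h1
    simp only [mul_zero, add_zero] at h1
    linarith
  · have h1 := key (1 / q)
    have h2 : (1/q)^2 * Complex.normSq z * q = Complex.normSq z / q := by
      field_simp
    have h3 : 2 * (1/q) * Complex.normSq z = 2 * (Complex.normSq z / q) := by
      ring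
    rw [h2, h3] at h1
    have h4 : Complex.normSq z / q ≤ p := by linarith
    calc Complex.normSq z = (Complex.normSq z / q) * q := by field_simp
    _ ≤ p * q := mul_le_mul_of_nonneg_right h4 hq
    


lemma cs2 (hE1 : E 1 = 1) (hEpos : ∀ x : A, 0 ≤ E (star x * x)) (a b : A) :
    ‖E (a * b)‖ ^ 2 ≤ (E (a * star a)).re * (E (star b * b)).re := by
  have h := cs0 E hE1 hEpos (star a) b
  rwa [star_star] at h


lemma bind_pair_prod {ι : Type*} (L : List ι) (f g : ι → A) :
    (L.map fun i => f i * g i).prod = (L.flatMap fun i => [f i, g i]).prod := by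
  induction L with
  | nil => simp
  | cons a L ih => simp [List.flatMap_cons, ih, mul_assoc]

lemma bind_pair_len {ι : Type*} (L : List ι) (f g : ι → A) :
    (L.flatMap fun i => [f i, g i]).length = 2 * L.length := by
  induction L with
  | nil => simp
  | cons a L ih => simp [List.flatMap_cons, ih]; omega

lemma bind_pair_map_prod {ι : Type*} (L : List ι) (f g : ι → A) (h : A → ℝ) :
    ((L.flatMap fun i => [f i, g i]).map h).prod = (L.map fun i => h (f i) * h (g i)).prod := by
  induction L with
  | nil => simp
  | cons a L ih => simp [List.flatMap_cons, ih, mul_assoc]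

lemma two_mul_succ_le (t : ℕ) : 2*(t+1) ≤ 2^(t+1) := by
  induction t with
  | zero => norm_num
  | succ k ih =>
    have h2 : 2 ≤ 2^(k+1) := by
      calc 2 = 2^1 := rfl
      _ ≤ 2^(k+1) := Nat.pow_le_pow_right (by norm_num) (by omega)
    calc 2*(k+1+1) = 2*(k+1) + 2 := by ring
    _ ≤ 2^(k+1) + 2^(k+1) := add_le_add ih h2
    _ = 2^(k+1+1) := by rw [pow_succ]; ring

section core

lemma shift (a b : A) (n : ℕ) : (a * b)^(n+1) = a * ((b*a)^n * b) := by
  induction n with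
  | zero => simp [mul_assoc]
  | succ k ih =>
    rw [pow_succ', ih, pow_succ']
    simp only [mul_assoc]

lemma Ecyc (hEtr : ∀ x y : A, E (x * y) = E (y * x)) (a b : A) (n : ℕ) (hn : n ≠ 0) : E ((a*b)^n) = E ((b*a)^n) := by
  obtain ⟨k, rfl⟩ := Nat.exists_eq_succ_of_ne_zero hn
  rw [shift, hEtr, mul_assoc, ← pow_succ]

lemma tau_even (hEpos : ∀ x : A, 0 ≤ E (star x * x)) (c : A) (hc : star c = c) (j : ℕ) : 0 ≤ (E (c^(2*j))).re := by
  have h : c^(2*j) = star (c^j) * (c^j) := by rw [star_pow, hc, two_mul, pow_add]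
  rw [h]; exact pos_re E hEpos _

lemma tau_even_pow (hEpos : ∀ x : A, 0 ≤ E (star x * x)) (c : A) (hc : star c = c) (s : ℕ) (hs : s ≠ 0) :
    0 ≤ (E (c^(2^s))).re := by
  obtain ⟨k, rfl⟩ := Nat.exists_eq_succ_of_ne_zero hs
  rw [pow_succ' 2 k]
  exact tau_even E hEpos c hc _

lemma sa_mul_sa (g : A) : star (star g * g) = star g * g := by
  rw [star_mul, star_star]

lemma ET (hE1 : E 1 = 1) (hEpos : ∀ x : A, 0 ≤ E (star x * x))
    (hEtr : ∀ x y : A, E (x * y) = E (y * x)) (s : ℕ) :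
    (∀ Y : A, ‖E (Y ^ (2^(s+1)))‖ ≤ (E ((Y * star Y)^(2^s))).re) ∧
    (∀ g h : A, ‖E (((star g * g) * (star h * h)) ^ (2^s))‖ ^ 2 ≤
      (E ((star g * g) ^ (2^(s+1)))).re * (E ((star h * h) ^ (2^(s+1)))).re) := by
  induction s with
  | zero =>
    constructor
    · intro Y
      have h := cs2 E hE1 hEpos Y Y
      rw [show E (star Y * Y) = E (Y * star Y) from hEtr _ _] at h
      have hb : 0 ≤ (E (Y * star Y)).re := by
        rw [show Y * star Y = star (star Y) * star Y by rw [star_star]]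
        exact pos_re E hEpos _
      have h2 : ‖E (Y*Y)‖ ≤ (E (Y * star Y)).re := by
        apply le_of_pow_le_pow_left₀ two_ne_zero hb
        calc ‖E (Y*Y)‖ ^ 2 ≤ _ := h
          _ = (E (Y*star Y)).re ^ 2 := (sq _).symm
      simpa [pow_one, pow_two] using h2
    · intro g h
      have h2 := cs2 E hE1 hEpos (star g * g) (star h * h)
      rw [sa_mul_sa, sa_mul_sa, ← pow_two, ← pow_two] at h2
      simpa [pow_one] using h2
  | succ s ih =>
    have ES : ∀ Y : A, ‖E (Y ^ (2^(s+2)))‖ ≤ (E ((Y * star Y)^(2^(s+1)))).re := by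
      intro Y
      have hpow : Y^(2^(s+2)) = (Y^2)^(2^(s+1)) := by
        rw [← pow_mul, ← pow_succ' 2 (s+1)]
      have h1 := ih.1 (Y^2)
      have e1 : (Y^2 * star (Y^2)) = (Y * (Y * star Y)) * star Y := by
        rw [star_pow]
        simp only [pow_two, mul_assoc]
      have e2 : E (((Y * (Y * star Y)) * star Y)^(2^s))
          = E (((star Y * Y) * (Y * star Y))^(2^s)) := by
        rw [Ecyc E hEtr _ _ _ (by positivity), ← mul_assoc]
      rw [e1, e2] at h1
      have h3 := ih.2 Y (star Y)
      rw [star_star] at h3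
      have ecy : E ((star Y * Y) ^ (2^(s+1))) = E ((Y * star Y) ^ (2^(s+1))) :=
        Ecyc E hEtr _ _ _ (by positivity)
      rw [ecy] at h3
      have hb : 0 ≤ (E ((Y * star Y) ^ (2^(s+1)))).re := by
        refine tau_even_pow E hEpos _ ?_ _ (by omega)
        rw [star_mul, star_star]
      have h4 : ‖E (((star Y * Y) * (Y * star Y))^(2^s))‖
          ≤ (E ((Y * star Y) ^ (2^(s+1)))).re := by
        apply le_of_pow_le_pow_left₀ two_ne_zero hb
        calc ‖E (((star Y * Y) * (Y * star Y))^(2^s))‖ ^ 2 ≤ _ := h3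
          _ = (E ((Y * star Y) ^ (2^(s+1)))).re ^ 2 := (sq _).symm
      calc ‖E (Y ^ (2^(s+2)))‖ = ‖E ((Y^2) ^ (2^(s+1)))‖ := by
            rw [hpow]
        _ ≤ (E (((star Y * Y) * (Y * star Y))^(2^s))).re := h1
        _ ≤ ‖E (((star Y * Y) * (Y * star Y))^(2^s))‖ := Complex.re_le_norm _
        _ ≤ (E ((Y * star Y) ^ (2^(s+1)))).re := h4
    refine ⟨ES, ?_⟩
    intro g h
    set P := star g * g with hPdef
    set Q := star h * h with hQdef
    have hP : star P = P := sa_mul_sa g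
    have hQ : star Q = Q := sa_mul_sa h
    have h1 := ih.1 (P * Q)
    have e1 : (P * Q) * star (P * Q) = (P * (Q * Q)) * P := by
      rw [star_mul, hP, hQ]
      simp only [mul_assoc]
    have e2 : E (((P * (Q * Q)) * P)^(2^s))
        = E (((P^2) * (Q^2))^(2^s)) := by
      rw [Ecyc E hEtr _ _ _ (by positivity)]
      congr 1
      simp only [pow_two, mul_assoc]
    rw [e1, e2] at h1
    have h3 := ih.2 P Q
    rw [hP, hQ, ← pow_two, ← pow_two] at h3
    have hfin1 : ((P^2) ^ (2^(s+1))) = P ^ (2^(s+2)) := by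
      rw [← pow_mul, ← pow_succ' 2 (s+1)]
    have hfin2 : ((Q^2) ^ (2^(s+1))) = Q ^ (2^(s+2)) := by
      rw [← pow_mul, ← pow_succ' 2 (s+1)]
    rw [hfin1, hfin2] at h3
    calc ‖E ((P * Q) ^ (2^(s+1)))‖ ^ 2
        ≤ (E (((P^2) * (Q^2))^(2^s))).re ^ 2 := by
          apply pow_le_pow_left₀ (norm_nonneg _) h1
      _ ≤ ‖E (((P^2) * (Q^2))^(2^s))‖ ^ 2 := by
          rw [Complex.sq_norm, Complex.normSq_apply]
          nlinarith [sq_nonneg (E (((P^2) * (Q^2))^(2^s))).im]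
      _ ≤ (E (P ^ (2^(s+2)))).re * (E (Q ^ (2^(s+2)))).re := h3


lemma list_tau_nonneg (hEpos : ∀ x : A, 0 ≤ E (star x * x)) (k : ℕ) (hk : k ≠ 0)
    (l : List A) (hl : ∀ c ∈ l, star c = c) :
    ∀ a ∈ l.map (fun c => (E (c ^ (2^k))).re), 0 ≤ a := by
  intro a ha
  simp only [List.mem_map] at ha
  obtain ⟨c, hc, rfl⟩ := ha
  exact tau_even_pow E hEpos c (hl c hc) k hk

lemma pal (hE1 : E 1 = 1) (hEpos : ∀ x : A, 0 ≤ E (star x * x))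
    (hEtr : ∀ x y : A, E (x * y) = E (y * x)) :
    ∀ k s : ℕ, ∀ l : List A, (∀ c ∈ l, star c = c) → l.length ≤ 2^k →
    (E ((l.prod * star l.prod) ^ (2^s))).re ^ (2^k)
      ≤ (l.map (fun c => (E (c ^ (2^(k+s+1)))).re)).prod := by
  intro k
  induction k with
  | zero =>
    intro s l hl hlen
    rcases l with _ | ⟨c, _ | ⟨d, l⟩⟩
    · simp [hE1]
    · have hc : star c = c := hl c (by simp)
      simp only [List.prod_cons, List.prod_nil, mul_one, List.map_cons, List.map_nil,
        pow_zero, pow_one, zero_add]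
      rw [hc]
      have e : (c*c)^(2^s) = c^(2^(s+1)) := by
        rw [← pow_two, ← pow_mul, ← pow_succ' 2 s]
      rw [e]
    · simp at hlen
  | succ k ih =>
    intro s l hl hlen
    set G := (l.take (2^k)).prod with hGdef
    set H := (l.drop (2^k)).prod with hHdef
    have hgmem : ∀ c ∈ l.take (2^k), star c = c := fun c hc => hl c (List.mem_of_mem_take hc)
    have hhmem : ∀ c ∈ l.drop (2^k), star c = c := fun c hc => hl c (List.mem_of_mem_drop hc)
    have hglen : (l.take (2^k)).length ≤ 2^k := by simp [List.length_take]
    have hhlen : (l.drop (2^k)).length ≤ 2^k := by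
      rw [List.length_drop]
      have : 2^(k+1) = 2^k + 2^k := by rw [pow_succ]; ring
      omega
    have hsplit : l.prod = G * H := by
      rw [hGdef, hHdef, ← List.prod_append, List.take_append_drop]
    -- E equality: (l.prod * star l.prod)^(2^s)  ~  ((star G * G) * (H * star H))^(2^s)
    have e0 : E ((l.prod * star l.prod) ^ (2^s))
        = E (((star G * G) * (H * star H)) ^ (2^s)) := by
      rw [hsplit, star_mul]
      have e1 : G * H * (star H * star G) = (G * (H * star H)) * star G := by
        simp only [mul_assoc]
      rw [e1, Ecyc E hEtr _ _ _ (by positivity), ← mul_assoc]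
    have key := (ET E hE1 hEpos hEtr s).2 G (star H)
    rw [star_star] at key
    -- key : |E (((star G * G) * (H * star H))^(2^s))|^2 ≤ τ((star G*G)^(2^(s+1))) * τ((H * star H)^(2^(s+1)))
    have ecyc1 : E ((star G * G) ^ (2^(s+1))) = E ((G * star G) ^ (2^(s+1))) :=
      Ecyc E hEtr _ _ _ (by positivity)
    rw [ecyc1] at key
    have ihg := ih (s+1) (l.take (2^k)) hgmem hglen
    have ihh := ih (s+1) (l.drop (2^k)) hhmem hhlen
    rw [show k+(s+1)+1 = k+1+s+1 by omega] at ihg ihh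
    -- assemble
    have habs1 : (E ((l.prod * star l.prod) ^ (2^s))).re ^ 2
        ≤ (E ((G * star G) ^ (2^(s+1)))).re * (E ((H * star H) ^ (2^(s+1)))).re := by
      calc (E ((l.prod * star l.prod) ^ (2^s))).re ^ 2
          = (E (((star G * G) * (H * star H)) ^ (2^s))).re ^ 2 := by rw [e0]
        _ ≤ ‖E (((star G * G) * (H * star H)) ^ (2^s))‖ ^ 2 := by
            rw [Complex.sq_norm, Complex.normSq_apply]
            nlinarith [sq_nonneg (E (((star G * G) * (H * star H)) ^ (2^s))).im]
        _ ≤ _ := key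
    have hGnn : 0 ≤ (E ((G * star G) ^ (2^(s+1)))).re := by
      refine tau_even_pow E hEpos _ ?_ _ (by omega)
      rw [star_mul, star_star]
    have hHnn : 0 ≤ (E ((H * star H) ^ (2^(s+1)))).re := by
      refine tau_even_pow E hEpos _ ?_ _ (by omega)
      rw [star_mul, star_star]
    calc (E ((l.prod * star l.prod) ^ (2^s))).re ^ (2^(k+1))
        = ((E ((l.prod * star l.prod) ^ (2^s))).re ^ 2) ^ (2^k) := by
          rw [← pow_mul, ← pow_succ' 2 k]
      _ ≤ ((E ((G * star G) ^ (2^(s+1)))).re * (E ((H * star H) ^ (2^(s+1)))).re) ^ (2^k) :=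
          pow_le_pow_left₀ (sq_nonneg _) habs1 _
      _ = (E ((G * star G) ^ (2^(s+1)))).re ^ (2^k) * (E ((H * star H) ^ (2^(s+1)))).re ^ (2^k) :=
          mul_pow _ _ _
      _ ≤ ((l.take (2^k)).map (fun c => (E (c ^ (2^(k+1+s+1)))).re)).prod
            * ((l.drop (2^k)).map (fun c => (E (c ^ (2^(k+1+s+1)))).re)).prod := by
          apply mul_le_mul ihg ihh (pow_nonneg hHnn _)
          exact List.prod_nonneg (list_tau_nonneg E hEpos _ (by omega) _ hgmem)
      _ = (l.map (fun c => (E (c ^ (2^(k+1+s+1)))).re)).prod := by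
          rw [← List.prod_append, ← List.map_append, List.take_append_drop]

lemma master (hE1 : E 1 = 1) (hEpos : ∀ x : A, 0 ≤ E (star x * x))
    (hEtr : ∀ x y : A, E (x * y) = E (y * x)) (k : ℕ) (l : List A)
    (hl : ∀ c ∈ l, star c = c) (hlen : l.length ≤ 2^(k+1)) :
    ‖E l.prod‖ ^ (2^(k+1)) ≤ (l.map (fun c => (E (c ^ (2^(k+1)))).re)).prod := by
  set G := (l.take (2^k)).prod with hGdef
  set H := (l.drop (2^k)).prod with hHdef
  have hgmem : ∀ c ∈ l.take (2^k), star c = c := fun c hc => hl c (List.mem_of_mem_take hc)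
  have hhmem : ∀ c ∈ l.drop (2^k), star c = c := fun c hc => hl c (List.mem_of_mem_drop hc)
  have hglen : (l.take (2^k)).length ≤ 2^k := by simp [List.length_take]
  have hhlen : (l.drop (2^k)).length ≤ 2^k := by
    rw [List.length_drop]
    have : 2^(k+1) = 2^k + 2^k := by rw [pow_succ]; ring
    omega
  have hsplit : l.prod = G * H := by
    rw [hGdef, hHdef, ← List.prod_append, List.take_append_drop]
  have h1 : ‖E (G * H)‖ ^ 2 ≤ (E (G * star G)).re * (E (star H * H)).re :=
    cs2 E hE1 hEpos G H
  have h1' : E (star H * H) = E (H * star H) := hEtr _ _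
  rw [h1'] at h1
  have ihg := pal E hE1 hEpos hEtr k 0 (l.take (2^k)) hgmem hglen
  have ihh := pal E hE1 hEpos hEtr k 0 (l.drop (2^k)) hhmem hhlen
  rw [pow_zero, pow_one] at ihg ihh
  rw [show k+0+1 = k+1 by omega] at ihg ihh
  have hGnn : 0 ≤ (E (G * star G)).re := by
    rw [show G * star G = star (star G) * star G by rw [star_star]]
    exact pos_re E hEpos _
  have hHnn : 0 ≤ (E (H * star H)).re := by
    rw [show H * star H = star (star H) * star H by rw [star_star]]
    exact pos_re E hEpos _
  calc ‖E l.prod‖ ^ (2^(k+1))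
      = (‖E (G * H)‖ ^ 2) ^ (2^k) := by
        rw [hsplit, ← pow_mul, ← pow_succ' 2 k]
    _ ≤ ((E (G * star G)).re * (E (H * star H)).re) ^ (2^k) :=
        pow_le_pow_left₀ (sq_nonneg _) h1 _
    _ = (E (G * star G)).re ^ (2^k) * (E (H * star H)).re ^ (2^k) := mul_pow _ _ _
    _ ≤ ((l.take (2^k)).map (fun c => (E (c ^ (2^(k+1)))).re)).prod
          * ((l.drop (2^k)).map (fun c => (E (c ^ (2^(k+1)))).re)).prod := by
        apply mul_le_mul ihg ihh (pow_nonneg hHnn _)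
        exact List.prod_nonneg (list_tau_nonneg E hEpos _ (by omega) _ hgmem)
    _ = (l.map (fun c => (E (c ^ (2^(k+1)))).re)).prod := by
        rw [← List.prod_append, ← List.map_append, List.take_append_drop]


end core
end MMaux

open MMaux

/-- The estimate on mixed moments of `Z` and `X` used for the third-derivative bound
(formula `estimate_third_derivative` of the paper and the computation following it). -/
theorem mixed_moment_estimate
    {A : Type*} [Ring A] [StarRing A] [Algebra ℂ A] [StarModule ℂ A]
    (E : A →ₗ[ℂ] ℂ)
    (hE1 : E 1 = 1)
    (hEpos : ∀ x : A, 0 ≤ E (star x * x))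
    (hEtr : ∀ x y : A, E (x * y) = E (y * x))
    (N : ℕ) (hN : 1 ≤ N)
    (X Z : A) (hX : star X = X) (hZ : star Z = Z)
    (B μ : ℕ → ℝ)
    (hB0 : B 0 = 1) (hμ0 : μ 0 = 1)
    (hB1 : ∀ j, 1 ≤ B j) (hμ1 : ∀ j, 1 ≤ μ j)
    (hZmom : ∀ j, E (Z ^ (2 * j)) ≤ ((B j : ℂ)))
    (hXmom : ∀ j, E (X ^ (2 * j)) ≤ ((μ j / (N : ℝ) ^ j : ℝ) : ℂ))
    (r : ℕ) (hr : 1 ≤ r) (m n : Fin r → ℕ) (hn : 3 ≤ ∑ i, n i) :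
    ‖E (((List.finRange r).map fun i => Z ^ (m i) * X ^ (n i)).prod)‖ ≤
      (∏ i : Fin r,
        (B (2 ^ (r - 1) * m i)) ^ (((2 : ℝ) ^ r)⁻¹) *
        (μ (2 ^ (r - 1) * n i)) ^ (((2 : ℝ) ^ r)⁻¹)) *
      (N : ℝ) ^ (-(3 / 2 : ℝ)) := by
  obtain ⟨t, rfl⟩ : ∃ t, r = t + 1 := ⟨r - 1, by omega⟩
  simp only [Nat.add_sub_cancel]
  set l : List A := (List.finRange (t+1)).flatMap (fun i => [Z ^ (m i), X ^ (n i)]) with hldef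
  have hprod : ((List.finRange (t+1)).map fun i => Z ^ (m i) * X ^ (n i)).prod = l.prod :=
    bind_pair_prod _ _ _
  have hlen : l.length ≤ 2^(t+1) := by
    rw [hldef, bind_pair_len]
    simpa using two_mul_succ_le t
  have hsa : ∀ c ∈ l, star c = c := by
    intro c hc
    rw [hldef] at hc
    simp only [List.mem_flatMap, List.mem_cons, List.mem_singleton, List.not_mem_nil,
      or_false] at hc
    obtain ⟨i, _, hc | hc⟩ := hc <;> subst hc
    · rw [star_pow, hZ]
    · rw [star_pow, hX]
  have hmaster := master E hE1 hEpos hEtr t l hsa hlen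
  have hmp : (l.map (fun c => (E (c ^ (2^(t+1)))).re)).prod
      = ∏ i : Fin (t+1), (E ((Z^(m i)) ^ (2^(t+1)))).re * (E ((X^(n i)) ^ (2^(t+1)))).re := by
    rw [hldef, bind_pair_map_prod, Fin.prod_univ_def]
  rw [hmp] at hmaster
  -- moment bounds
  have hZeq : ∀ i : Fin (t+1), (Z^(m i)) ^ (2^(t+1)) = Z ^ (2 * (2^t * m i)) := by
    intro i
    rw [← pow_mul]
    congr 1
    rw [pow_succ]
    ring
  have hXeq : ∀ i : Fin (t+1), (X^(n i)) ^ (2^(t+1)) = X ^ (2 * (2^t * n i)) := by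
    intro i
    rw [← pow_mul]
    congr 1
    rw [pow_succ]
    ring
  have hZle : ∀ i : Fin (t+1), (E ((Z^(m i)) ^ (2^(t+1)))).re ≤ B (2^t * m i) := by
    intro i
    rw [hZeq i]
    have h := hZmom (2^t * m i)
    rw [Complex.le_def] at h
    simpa using h.1
  have hXle : ∀ i : Fin (t+1),
      (E ((X^(n i)) ^ (2^(t+1)))).re ≤ μ (2^t * n i) / (N:ℝ)^(2^t * n i) := by
    intro i
    rw [hXeq i]
    have h := hXmom (2^t * n i)
    rw [Complex.le_def] at h
    have h1 := h.1
    rwa [Complex.ofReal_re] at h1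
  have hZnn : ∀ i : Fin (t+1), 0 ≤ (E ((Z^(m i)) ^ (2^(t+1)))).re := by
    intro i; rw [hZeq i]; exact tau_even E hEpos Z hZ _
  have hXnn : ∀ i : Fin (t+1), 0 ≤ (E ((X^(n i)) ^ (2^(t+1)))).re := by
    intro i; rw [hXeq i]; exact tau_even E hEpos X hX _
  set R : ℝ := ∏ i : Fin (t+1), (B (2^t * m i) * (μ (2^t * n i) / (N:ℝ)^(2^t * n i))) with hRdef
  have hNpos : (0:ℝ) < (N:ℝ) := by positivity
  have hN1 : (1:ℝ) ≤ (N:ℝ) := by exact_mod_cast hN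
  have hfacnn : ∀ i : Fin (t+1),
      0 ≤ B (2^t * m i) * (μ (2^t * n i) / (N:ℝ)^(2^t * n i)) := by
    intro i
    have h1 : (0:ℝ) ≤ B (2^t * m i) := le_trans zero_le_one (hB1 _)
    have h2 : (0:ℝ) ≤ μ (2^t * n i) := le_trans zero_le_one (hμ1 _)
    positivity
  have hRK : ‖E l.prod‖ ^ (2^(t+1)) ≤ R := by
    refine le_trans hmaster ?_
    apply Finset.prod_le_prod
    · intro i _; exact mul_nonneg (hZnn i) (hXnn i)
    · intro i _
      apply mul_le_mul (hZle i) (hXle i) (hXnn i) (le_trans zero_le_one (hB1 _))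
  -- pass to the 2^(t+1)-th root
  set e : ℝ := ((2:ℝ)^(t+1))⁻¹ with hedef
  have hK0 : (2^(t+1) : ℕ) ≠ 0 := by positivity
  have hKe : (((2^(t+1) : ℕ) : ℝ))⁻¹ = e := by
    rw [hedef]; push_cast; ring
  have he0 : (0:ℝ) ≤ e := by rw [hedef]; positivity
  have hF0 : (0:ℝ) ≤ ‖E l.prod‖ := norm_nonneg _
  have hstep1 : ‖E l.prod‖ ≤ R ^ e := by
    calc ‖E l.prod‖
        = ((‖E l.prod‖) ^ (2^(t+1) : ℕ)) ^ (((2^(t+1) : ℕ) : ℝ))⁻¹ :=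
          (Real.pow_rpow_inv_natCast hF0 hK0).symm
      _ ≤ R ^ (((2^(t+1) : ℕ) : ℝ))⁻¹ := by
          apply Real.rpow_le_rpow (by positivity) hRK (by positivity)
      _ = R ^ e := by rw [hKe]
  -- compute R ^ e
  set J : ℕ := ∑ i : Fin (t+1), 2^t * n i with hJdef
  have hBnn : ∀ i : Fin (t+1), (0:ℝ) ≤ B (2^t * m i) := fun i => le_trans zero_le_one (hB1 _)
  have hμnn : ∀ i : Fin (t+1), (0:ℝ) ≤ μ (2^t * n i) := fun i => le_trans zero_le_one (hμ1 _)
  have hRe : R ^ e = (∏ i : Fin (t+1),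
      (B (2^t * m i)) ^ e * (μ (2^t * n i)) ^ e) / ((N:ℝ) ^ J) ^ e := by
    rw [hRdef, ← Real.finset_prod_rpow _ _ (fun i _ => hfacnn i) e]
    have hstep : ∀ i : Fin (t+1),
        (B (2^t * m i) * (μ (2^t * n i) / (N:ℝ)^(2^t * n i))) ^ e
          = ((B (2^t * m i)) ^ e * (μ (2^t * n i)) ^ e) / ((N:ℝ)^(2^t * n i)) ^ e := by
      intro i
      rw [Real.mul_rpow (hBnn i) (div_nonneg (hμnn i) (by positivity)),
        Real.div_rpow (hμnn i) (by positivity), mul_div_assoc]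
    rw [Finset.prod_congr rfl (fun i _ => hstep i), Finset.prod_div_distrib,
      Real.finset_prod_rpow _ _ (fun i _ => by positivity) e,
      Finset.prod_pow_eq_pow_sum, ← hJdef]
  have hJS : (J : ℝ) * e = (∑ i : Fin (t+1), n i : ℕ) / 2 := by
    have h1 : J = 2^t * (∑ i : Fin (t+1), n i) := by
      rw [hJdef, Finset.mul_sum]
    rw [h1, hedef]
    push_cast
    rw [pow_succ]
    have h2 : ((2:ℝ)^t) ≠ 0 := by positivity
    field_simp
  have hJ32 : (3/2 : ℝ) ≤ (J : ℝ) * e := by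
    rw [hJS]
    have : (3 : ℝ) ≤ (∑ i : Fin (t+1), n i : ℕ) := by exact_mod_cast hn
    linarith
  have hNJ : ((N:ℝ) ^ J) ^ e = (N:ℝ) ^ ((J:ℝ) * e) := by
    rw [← Real.rpow_natCast (N:ℝ) J, ← Real.rpow_mul (le_of_lt hNpos)]
  have hPnn : (0:ℝ) ≤ ∏ i : Fin (t+1), (B (2^t * m i)) ^ e * (μ (2^t * n i)) ^ e := by
    apply Finset.prod_nonneg
    intro i _
    exact mul_nonneg (Real.rpow_nonneg (hBnn i) e) (Real.rpow_nonneg (hμnn i) e)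
  have hlast : R ^ e ≤ (∏ i : Fin (t+1),
      (B (2^t * m i)) ^ e * (μ (2^t * n i)) ^ e) * (N:ℝ) ^ (-(3/2 : ℝ)) := by
    rw [hRe, hNJ, div_eq_mul_inv, ← Real.rpow_neg (le_of_lt hNpos)]
    apply mul_le_mul_of_nonneg_left _ hPnn
    apply Real.rpow_le_rpow_of_exponent_le hN1
    linarith
  rw [hprod]
  exact le_trans hstep1 hlast
end
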